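/- arXiv:1210.7516 — 9 statements merged into one kernel-verified Lean document; each statement's English description precedes it below -/
import Mathlib

section
/- Every Steiner 2-design with block size k is k-even-free; that is, it contains no nonempty collection of at most k blocks in which every point covered by the collection lies in an even number of blocks of the collection. -/
/-- Every Steiner 2-design with block size `k` is `k`-even-free. -/
theorem stmt_0 {α : Type*} [DecidableEq α] (k : ℕ) (V : Finset α)
    (B : Finset (Finset α))
    (hblocks : ∀ b ∈ B, b ⊆ V ∧ b.card = k)
    (hpair : ∀ p ∈ V, ∀ q ∈ V, p ≠ q → ∃! b, b ∈ B ∧ p ∈ b ∧ q ∈ b) :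
    ¬ ∃ C : Finset (Finset α), C ⊆ B ∧ C.Nonempty ∧ C.card ≤ k ∧
      ∀ p ∈ C.biUnion id, Even ((C.filter fun b => p ∈ b).card) := by
  rintro ⟨C, hCB, ⟨b₀, hb₀⟩, hcard, heven⟩
  have hb₀B := hCB hb₀
  obtain ⟨hb₀V, hb₀k⟩ := hblocks b₀ hb₀B
  have hf : ∀ p : α, ∃ b, p ∈ b₀ → b ∈ C.erase b₀ ∧ p ∈ b := by
    intro p
    by_cases hp : p ∈ b₀
    · have hpe : Even ((C.filter fun b => p ∈ b).card) :=
        heven p (Finset.mem_biUnion.2 ⟨b₀, hb₀, hp⟩)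
      have h1 : b₀ ∈ C.filter fun b => p ∈ b := Finset.mem_filter.2 ⟨hb₀, hp⟩
      have hpos : 0 < (C.filter fun b => p ∈ b).card := Finset.card_pos.2 ⟨b₀, h1⟩
      have h2 : 1 < (C.filter fun b => p ∈ b).card := by
        rcases hpe with ⟨n, hn⟩; omega
      obtain ⟨b, hb, hne⟩ := Finset.exists_mem_ne h2 b₀
      exact ⟨b, fun _ => ⟨Finset.mem_erase.2 ⟨hne, (Finset.mem_filter.1 hb).1⟩,
        (Finset.mem_filter.1 hb).2⟩⟩
    · exact ⟨b₀, fun h => absurd h hp⟩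
  choose f hfmem using hf
  have hinj : Set.InjOn f b₀ := by
    intro p hp q hq heq
    by_contra hne
    obtain ⟨hfp₁, hfp₂⟩ := hfmem p hp
    obtain ⟨hfq₁, hfq₂⟩ := hfmem q hq
    obtain ⟨b, _, huniq⟩ := hpair p (hb₀V hp) q (hb₀V hq) hne
    have h1 : b₀ = b := huniq b₀ ⟨hb₀B, hp, hq⟩
    have hfB : f p ∈ B := hCB (Finset.mem_erase.1 hfp₁).2
    have h2 : f p = b := huniq _ ⟨hfB, hfp₂, heq ▸ hfq₂⟩
    exact (Finset.mem_erase.1 hfp₁).1 (h2.trans h1.symm)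
  have hle : b₀.card ≤ (C.erase b₀).card :=
    Finset.card_le_card_of_injOn f (fun p hp => (hfmem p hp).1) hinj
  have := Finset.card_erase_of_mem hb₀
  have := Finset.card_pos.2 ⟨b₀, hb₀⟩
  omega
end

section
/- If an abelian group G acts transitively (as an automorphism group) on the points of a nontrivial r-even-free Steiner 2-design S(2,k,v) whose block set consists of at least two G-orbits, then r ≤ 2k-1; that is, the design contains an even configuration on exactly 2k blocks. -/
/-- If an abelian group acts transitively on the points of a nontrivial `r`-even-free
Steiner 2-design whose block set has at least two orbits, then `r ≤ 2k - 1`. -/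
theorem stmt_5 {α : Type*} [Fintype α] [DecidableEq α] {G : Type*} [CommGroup G]
    [MulAction G α] (k r : ℕ)
    (B : Finset (Finset α))
    (hblocks : ∀ b ∈ B, b.card = k)
    (hpair : ∀ p q : α, p ≠ q → ∃! b, b ∈ B ∧ p ∈ b ∧ q ∈ b)
    (hnontrivial : k < Fintype.card α)
    (haut : ∀ g : G, ∀ b ∈ B, b.image (fun x => g • x) ∈ B)
    (htrans : ∀ x y : α, ∃ g : G, g • x = y)
    (horbits : ∃ b1 ∈ B, ∃ b2 ∈ B, ∀ g : G, b1.image (fun x => g • x) ≠ b2)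
    (hevenfree : ∀ C ⊆ B, C.Nonempty → C.card ≤ r →
      ¬ ∀ p ∈ C.biUnion id, Even ((C.filter fun b => p ∈ b).card)) :
    r ≤ 2 * k - 1 := by
  classical
  obtain ⟨b1, hb1, b2, hb2, hne⟩ := horbits
  by_contra hr
  push_neg at hr
  -- k cannot be 0
  rcases Nat.eq_zero_or_pos k with hk0 | hk
  · subst hk0
    have h1 : b1 = ∅ := Finset.card_eq_zero.mp (hblocks b1 hb1)
    have h2 : b2 = ∅ := Finset.card_eq_zero.mp (hblocks b2 hb2)
    exact hne 1 (by simp [h1, h2])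
  have h2k : 2 * k ≤ r := by omega
  -- choose a common point a
  obtain ⟨a, ha⟩ := Finset.card_pos.mp (by rw [hblocks b2 hb2]; exact hk)
  obtain ⟨x0, hx0⟩ := Finset.card_pos.mp (by rw [hblocks b1 hb1]; exact hk)
  obtain ⟨g0, hg0⟩ := htrans x0 a
  set B0 : Finset α := b1.image (fun x => g0 • x) with hB0def
  have hB0 : B0 ∈ B := haut g0 b1 hb1
  have haB0 : a ∈ B0 := Finset.mem_image.mpr ⟨x0, hx0, hg0⟩
  have hB1 : b2 ∈ B := hb2
  have haB1 : a ∈ b2 := ha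
  -- generalities about the action
  have hcomm : ∀ (g h : G) (x : α), g • h • x = h • g • x := by
    intro g h x; rw [smul_smul, smul_smul, mul_comm]
  have himg : ∀ (g h : G) (b : Finset α),
      (b.image (fun x => h • x)).image (fun x => g • x)
        = b.image (fun x => (g * h) • x) := by
    intro g h b
    rw [Finset.image_image]
    exact Finset.image_congr (fun x _ => smul_smul g h x)
  have hmem : ∀ (g : G) (b : Finset α) (p : α),
      p ∈ b.image (fun x => g • x) ↔ g⁻¹ • p ∈ b := by
    intro g b p
    constructor
    · intro h
      obtain ⟨x, hx, rfl⟩ := Finset.mem_image.mp h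
      simpa using hx
    · intro h
      exact Finset.mem_image.mpr ⟨g⁻¹ • p, h, by simp⟩
  -- B0 is never mapped onto b2
  have hdiff : ∀ g : G, B0.image (fun x => g • x) ≠ b2 := by
    intro g h
    apply hne (g * g0)
    rw [← himg]; exact h
  -- transitivity choices
  choose e he using fun x => htrans a x
  have step : ∀ y x : α, e y • (e x • a) = e x • y := by
    intro y x; rw [hcomm, he y]
  -- key memberships
  have hyA : ∀ y : α, y ∈ B0.image (fun p => e y • p) :=
    fun y => Finset.mem_image.mpr ⟨a, haB0, he y⟩
  have hxB : ∀ x : α, x ∈ b2.image (fun p => e x • p) :=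
    fun x => Finset.mem_image.mpr ⟨a, haB1, he x⟩
  -- blocks from the two families are distinct
  have hcross : ∀ y x : α, B0.image (fun p => e y • p) ≠ b2.image (fun p => e x • p) := by
    intro y x h
    apply hdiff ((e x)⁻¹ * e y)
    rw [← himg, h, himg]
    simp
  -- injectivity of the two families
  have hinjA : Set.InjOn (fun y => B0.image (fun p => e y • p)) (b2 : Set α) := by
    intro y hy y' hy' h
    by_contra hne'
    obtain ⟨b, _, hun⟩ := hpair y y' hne'
    have h1 : y ∈ B0.image (fun p => e y • p) := hyA y
    have h2 : y' ∈ B0.image (fun p => e y • p) := by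
      have := hyA y'
      simpa [h] using this
    have e1 : B0.image (fun p => e y • p) = b :=
      hun _ ⟨haut (e y) B0 hB0, h1, h2⟩
    have e2 : b2 = b := hun _ ⟨hb2, hy, hy'⟩
    exact hdiff (e y) (e1.trans e2.symm)
  have hinjB : Set.InjOn (fun x => b2.image (fun p => e x • p)) (B0 : Set α) := by
    intro x hx x' hx' h
    by_contra hne'
    obtain ⟨b, _, hun⟩ := hpair x x' hne'
    have h1 : x ∈ b2.image (fun p => e x • p) := hxB x
    have h2 : x' ∈ b2.image (fun p => e x • p) := by
      have := hxB x'
      simpa [h] using this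
    have e1 : b2.image (fun p => e x • p) = b :=
      hun _ ⟨haut (e x) b2 hb2, h1, h2⟩
    have e2 : B0 = b := hun _ ⟨hB0, hx, hx'⟩
    apply hdiff (e x)⁻¹
    have := e1.trans e2.symm
    rw [← this, himg]
    simp
  -- the even configuration
  set A : Finset (Finset α) := b2.image (fun y => B0.image (fun p => e y • p)) with hAdef
  set Bf : Finset (Finset α) := B0.image (fun x => b2.image (fun p => e x • p)) with hBfdef
  set C : Finset (Finset α) := A ∪ Bf with hCdef
  have hCB : C ⊆ B := by
    apply Finset.union_subset
    · intro c hc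
      obtain ⟨y, _, rfl⟩ := Finset.mem_image.mp hc
      exact haut (e y) B0 hB0
    · intro c hc
      obtain ⟨x, _, rfl⟩ := Finset.mem_image.mp hc
      exact haut (e x) b2 hb2
  have hCne : C.Nonempty := by
    refine ⟨B0.image (fun p => e a • p), ?_⟩
    exact Finset.mem_union_left _ (Finset.mem_image.mpr ⟨a, ha, rfl⟩)
  have hdisj : Disjoint A Bf := by
    rw [Finset.disjoint_left]
    rintro c hc hc'
    obtain ⟨y, _, rfl⟩ := Finset.mem_image.mp hc
    obtain ⟨x, _, hx⟩ := Finset.mem_image.mp hc'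
    exact hcross y x hx.symm
  have hcardC : C.card ≤ r := by
    calc C.card ≤ A.card + Bf.card := Finset.card_union_le _ _
      _ ≤ b2.card + B0.card := by
          gcongr <;> exact Finset.card_image_le
      _ = 2 * k := by
          rw [hblocks b2 hb2, hblocks B0 hB0]; ring
      _ ≤ r := h2k
  -- evenness
  apply hevenfree C hCB hCne hcardC
  intro p _
  have hfA : (A.filter fun b => p ∈ b).card
      = (b2.filter fun y => p ∈ B0.image (fun q => e y • q)).card := by
    rw [hAdef, Finset.filter_image]
    exact Finset.card_image_of_injOn
      (hinjA.mono (by exact_mod_cast Finset.filter_subset _ _))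
  have hfB : (Bf.filter fun b => p ∈ b).card
      = (B0.filter fun x => p ∈ b2.image (fun q => e x • q)).card := by
    rw [hBfdef, Finset.filter_image]
    exact Finset.card_image_of_injOn
      (hinjB.mono (by exact_mod_cast Finset.filter_subset _ _))
  -- the two filtered sets have the same cardinality
  have hbij : (b2.filter fun y => p ∈ B0.image (fun q => e y • q)).card
      = (B0.filter fun x => p ∈ b2.image (fun q => e x • q)).card := by
    apply Finset.card_bij (fun y _ => (e y)⁻¹ • p)
    · intro y hy
      rw [Finset.mem_filter] at hy ⊢
      obtain ⟨hyb2, hyp⟩ := hy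
      obtain ⟨q, hq, hqp⟩ := Finset.mem_image.mp hyp
      have eq1 : (e y)⁻¹ • p = q := by rw [← hqp, inv_smul_smul]
      rw [eq1]
      refine ⟨hq, Finset.mem_image.mpr ⟨y, hyb2, ?_⟩⟩
      rw [← step, he q]; exact hqp
    · intro y hy y' hy' hyy'
      rw [Finset.mem_filter] at hy hy'
      obtain ⟨q, hq, hqp⟩ := Finset.mem_image.mp hy.2
      obtain ⟨q', hq', hqp'⟩ := Finset.mem_image.mp hy'.2
      have eq1 : (e y)⁻¹ • p = q := by rw [← hqp, inv_smul_smul]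
      have eq2 : (e y')⁻¹ • p = q' := by rw [← hqp', inv_smul_smul]
      have hqq' : q = q' := by rw [← eq1, ← eq2, hyy']
      have : e q • y = e q • y' := by
        rw [← step y q, ← step y' q, he q, hqp, hqq']
        exact hqp'.symm
      exact smul_left_cancel _ this
    · intro x hx
      rw [Finset.mem_filter] at hx
      obtain ⟨hxB0, hxp⟩ := hx
      obtain ⟨y, hy, hyp⟩ := Finset.mem_image.mp hxp
      have hpy : e y • x = p := by
        rw [← he x, step, hyp]
      refine ⟨y, ?_, ?_⟩
      · rw [Finset.mem_filter]
        exact ⟨hy, Finset.mem_image.mpr ⟨x, hxB0, hpy⟩⟩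
      · rw [← hpy, inv_smul_smul]
  -- put it together
  rw [hCdef, Finset.filter_union,
    Finset.card_union_of_disjoint
      (hdisj.mono (Finset.filter_subset _ _) (Finset.filter_subset _ _)),
    hfA, hfB, hbij]
  exact ⟨_, rfl⟩
end

section
/- If an abelian group acts transitively on the points of a Steiner 2-design S(2,k,v) whose blocks form a single orbit, then either v ≤ k or v = k(k-1)+1. -/
/-!
Counting the pairs through a point gives `r_x (k - 1) = v - 1` for the number `r_x` of blocks
through `x`, and counting flags gives `|B| k (k - 1) = v (v - 1)`. Every block through a point `y`
off a block `b₀` meets `b₀` in at most one point, so `k ≤ r_y`, i.e. `k (k - 1) ≤ v - 1`.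
Conversely, a point stabiliser of an abelian transitive group fixes every point, so `g • b₀`
depends only on `g • x₀`; hence `|B| ≤ v`, i.e. `v - 1 ≤ k (k - 1)`.
-/

open Finset

section SteinerSystem

variable {α : Type*} [DecidableEq α] {B : Finset (Finset α)} {k : ℕ}

theorem card_inter_le_one_of_existsUnique
    (hpair : ∀ p q : α, p ≠ q → ∃! b, b ∈ B ∧ p ∈ b ∧ q ∈ b)
    {b b' : Finset α} (hb : b ∈ B) (hb' : b' ∈ B) (hne : b ≠ b') : #(b ∩ b') ≤ 1 := by
  rw [card_le_one]
  intro p hp q hq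
  by_contra hpq
  rw [mem_inter] at hp hq
  exact hne ((hpair p q hpq).unique ⟨hb, hp.1, hq.1⟩ ⟨hb', hp.2, hq.2⟩)

theorem card_filter_mem_mul_eq [Fintype α] (hblocks : ∀ b ∈ B, #b = k)
    (hpair : ∀ p q : α, p ≠ q → ∃! b, b ∈ B ∧ p ∈ b ∧ q ∈ b) (x : α) :
    #{b ∈ B | x ∈ b} * (k - 1) = Fintype.card α - 1 := by
  have hcover : {b ∈ B | x ∈ b}.biUnion (·.erase x) = univ.erase x := by
    ext z
    simp only [mem_biUnion, mem_filter, mem_erase, mem_univ, and_true]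
    refine ⟨fun ⟨_, _, hzx, _⟩ => hzx, fun hzx => ?_⟩
    obtain ⟨b, ⟨hb, hxb, hzb⟩, _⟩ := hpair x z (Ne.symm hzx)
    exact ⟨b, ⟨hb, hxb⟩, hzx, hzb⟩
  have hdisj : (({b ∈ B | x ∈ b} : Finset _) : Set (Finset α)).PairwiseDisjoint (·.erase x) := by
    intro b hb b' hb' hne
    rw [mem_coe, mem_filter] at hb hb'
    refine disjoint_left.mpr fun z hz hz' => hne ?_
    rw [mem_erase] at hz hz'
    exact (hpair x z (Ne.symm hz.1)).unique ⟨hb.1, hb.2, hz.2⟩ ⟨hb'.1, hb'.2, hz'.2⟩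
  calc #{b ∈ B | x ∈ b} * (k - 1) = ∑ b ∈ {b ∈ B | x ∈ b}, #(b.erase x) := by
        rw [sum_const_nat fun b hb => ?_]
        rw [mem_filter] at hb
        rw [card_erase_of_mem hb.2, hblocks b hb.1]
    _ = Fintype.card α - 1 := by
        rw [← card_biUnion hdisj, hcover, card_erase_of_mem (mem_univ x), card_univ]

theorem card_mul_eq_sum_card_filter_mem [Fintype α] (hblocks : ∀ b ∈ B, #b = k) :
    #B * k = ∑ x, #{b ∈ B | x ∈ b} :=
  calc #B * k = ∑ b ∈ B, #{x | x ∈ b} := by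
        rw [sum_const_nat fun b hb => by rw [filter_mem_eq_inter, univ_inter, hblocks b hb]]
    _ = ∑ x, #{b ∈ B | x ∈ b} :=
        sum_card_bipartiteAbove_eq_sum_card_bipartiteBelow (fun b x => x ∈ b)

theorem card_mul_mul_pred_eq [Fintype α] (hblocks : ∀ b ∈ B, #b = k)
    (hpair : ∀ p q : α, p ≠ q → ∃! b, b ∈ B ∧ p ∈ b ∧ q ∈ b) :
    #B * (k * (k - 1)) = Fintype.card α * (Fintype.card α - 1) := by
  rw [← mul_assoc, card_mul_eq_sum_card_filter_mem hblocks, sum_mul,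
    sum_congr rfl fun x _ => card_filter_mem_mul_eq hblocks hpair x, sum_const, card_univ,
    smul_eq_mul]

theorem card_le_card_filter_mem_of_notMem
    (hpair : ∀ p q : α, p ≠ q → ∃! b, b ∈ B ∧ p ∈ b ∧ q ∈ b)
    {b₀ : Finset α} (hb₀ : b₀ ∈ B) {y : α} (hy : y ∉ b₀) : #b₀ ≤ #{b ∈ B | y ∈ b} := by
  have hcover : b₀ ⊆ {b ∈ B | y ∈ b}.biUnion (· ∩ b₀) := by
    intro x hx
    obtain ⟨b, ⟨hb, hyb, hxb⟩, _⟩ := hpair y x (ne_of_mem_of_not_mem hx hy).symm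
    exact mem_biUnion.mpr ⟨b, mem_filter.mpr ⟨hb, hyb⟩, mem_inter.mpr ⟨hxb, hx⟩⟩
  calc #b₀ ≤ ∑ b ∈ {b ∈ B | y ∈ b}, #(b ∩ b₀) := (card_le_card hcover).trans card_biUnion_le
    _ ≤ ∑ _b ∈ {b ∈ B | y ∈ b}, 1 := sum_le_sum fun b hb => by
        rw [mem_filter] at hb
        exact card_inter_le_one_of_existsUnique hpair hb.1 hb₀ (ne_of_mem_of_not_mem' hb.2 hy)
    _ = #{b ∈ B | y ∈ b} := card_eq_sum_ones _ |>.symm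

end SteinerSystem

section AbelianAction

variable {G α : Type*} [CommGroup G] [MulAction G α] [MulAction.IsPretransitive G α]

theorem smul_eq_smul_of_smul_eq {g h : G} {x : α} (hx : g • x = h • x) (y : α) :
    g • y = h • y := by
  obtain ⟨c, rfl⟩ := MulAction.exists_smul_eq G x y
  rw [smul_smul, mul_comm, mul_smul, hx, ← mul_smul, mul_comm, mul_smul]

theorem card_le_card_of_forall_eq_image_smul [DecidableEq α] [Fintype α] [Nonempty α]
    {B : Finset (Finset α)} {b₀ : Finset α} (hB : ∀ b ∈ B, ∃ g : G, b = b₀.image (g • ·)) :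
    #B ≤ Fintype.card α := by
  let x₀ : α := Classical.arbitrary α
  choose c hc using MulAction.exists_smul_eq G x₀
  rw [← card_univ]
  refine card_le_card_of_surjOn (fun y => b₀.image (c y • ·)) fun b hb => ?_
  obtain ⟨g, rfl⟩ := hB b hb
  exact ⟨g • x₀, mem_coe.mpr (mem_univ _),
    image_congr fun x _ => smul_eq_smul_of_smul_eq (hc (g • x₀)) x⟩

end AbelianAction

theorem stmt_6_general {α : Type*} [Fintype α] [DecidableEq α] {G : Type*} [CommGroup G]
    [MulAction G α] (k : ℕ)
    (B : Finset (Finset α))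
    (hblocks : ∀ b ∈ B, b.card = k)
    (hpair : ∀ p q : α, p ≠ q → ∃! b, b ∈ B ∧ p ∈ b ∧ q ∈ b)
    (htrans : ∀ x y : α, ∃ g : G, g • x = y)
    (horbit : ∃ b0 ∈ B, ∀ b ∈ B, ∃ g : G, b = b0.image (fun x => g • x)) :
    Fintype.card α ≤ k ∨ Fintype.card α = k * (k - 1) + 1 := by
  have : MulAction.IsPretransitive G α := ⟨htrans⟩
  obtain ⟨b₀, hb₀, hB⟩ := horbit
  rcases le_or_gt (Fintype.card α) k with hle | hlt
  · exact Or.inl hle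
  obtain ⟨y, -, hy⟩ : ∃ y ∈ univ, y ∉ b₀ :=
    exists_mem_notMem_of_card_lt_card (by rwa [hblocks b₀ hb₀, card_univ])
  have : Nonempty α := ⟨y⟩
  have hpos : 0 < Fintype.card α := Fintype.card_pos
  have hlower : k * (k - 1) ≤ Fintype.card α - 1 := by
    rw [← card_filter_mem_mul_eq hblocks hpair y, ← hblocks b₀ hb₀]
    exact Nat.mul_le_mul_right _ (card_le_card_filter_mem_of_notMem hpair hb₀ hy)
  have hupper : Fintype.card α - 1 ≤ k * (k - 1) := by
    refine Nat.le_of_mul_le_mul_left ?_ hpos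
    calc Fintype.card α * (Fintype.card α - 1) = #B * (k * (k - 1)) :=
          (card_mul_mul_pred_eq hblocks hpair).symm
      _ ≤ Fintype.card α * (k * (k - 1)) :=
          Nat.mul_le_mul_right _ (card_le_card_of_forall_eq_image_smul hB)
  right
  omega

/-- If an abelian group acts transitively on the points of a Steiner 2-design whose
blocks form a single orbit, then `v ≤ k` or `v = k(k-1) + 1`. -/
theorem stmt_6 {α : Type*} [Fintype α] [DecidableEq α] {G : Type*} [CommGroup G]
    [MulAction G α] (k : ℕ)
    (B : Finset (Finset α))
    (hblocks : ∀ b ∈ B, b.card = k)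
    (hpair : ∀ p q : α, p ≠ q → ∃! b, b ∈ B ∧ p ∈ b ∧ q ∈ b)
    (haut : ∀ g : G, ∀ b ∈ B, b.image (fun x => g • x) ∈ B)
    (htrans : ∀ x y : α, ∃ g : G, g • x = y)
    (horbit : ∃ b0 ∈ B, ∀ b ∈ B, ∃ g : G, b = b0.image (fun x => g • x)) :
    Fintype.card α ≤ k ∨ Fintype.card α = k * (k - 1) + 1 :=
  stmt_6_general k B hblocks hpair htrans horbit
end

section
/- If a cyclic Steiner 2-design S(2,k,v) exists (with Z_v acting regularly on the points by translation), then v ≡ 1 or v ≡ k (mod k(k-1)). -/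
open Finset

namespace Stmt7

variable {v : ℕ}

/-- Translation of a block by `t`. -/
def tr (t : ZMod v) (b : Finset (ZMod v)) : Finset (ZMod v) := b.image (· + t)

lemma mem_tr {t : ZMod v} {b : Finset (ZMod v)} {x : ZMod v} :
    x ∈ tr t b ↔ x - t ∈ b := by
  constructor
  · rintro h
    rcases Finset.mem_image.1 h with ⟨a, ha, rfl⟩
    simpa using ha
  · intro h
    exact Finset.mem_image.2 ⟨x - t, h, by ring⟩

lemma tr_zero (b : Finset (ZMod v)) : tr 0 b = b := by
  ext x; simp [mem_tr]

lemma tr_tr (s t : ZMod v) (b : Finset (ZMod v)) : tr s (tr t b) = tr (t + s) b := by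
  ext x
  rw [mem_tr, mem_tr, mem_tr, sub_sub, add_comm s t]

lemma card_tr (t : ZMod v) (b : Finset (ZMod v)) : (tr t b).card = b.card :=
  Finset.card_image_of_injective _ (add_left_injective t)

lemma tr_eq_tr_iff {s t : ZMod v} {b : Finset (ZMod v)} :
    tr t b = tr s b ↔ tr (t - s) b = b := by
  constructor
  · intro h
    have := congrArg (tr (-s)) h
    rw [tr_tr, tr_tr] at this
    simpa [sub_eq_add_neg, tr_zero] using this
  · intro h
    have := congrArg (tr s) h
    rw [tr_tr] at this
    rw [← this]
    ring_nf

section Main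

variable [NeZero v] (B : Finset (Finset (ZMod v)))

/-- The orbit of a block under translations. -/
def orb (b : Finset (ZMod v)) : Finset (Finset (ZMod v)) :=
  Finset.univ.image (fun t => tr t b)

/-- The stabilizer of a block. -/
def stab (b : Finset (ZMod v)) : Finset (ZMod v) :=
  Finset.univ.filter (fun t => tr t b = b)

lemma mem_stab {b : Finset (ZMod v)} {t : ZMod v} : t ∈ stab b ↔ tr t b = b := by
  simp [stab]

lemma zero_mem_stab (b : Finset (ZMod v)) : (0 : ZMod v) ∈ stab b :=
  mem_stab.2 (tr_zero b)

lemma sub_mem_stab {b : Finset (ZMod v)} {s t : ZMod v}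
    (hs : s ∈ stab b) (ht : t ∈ stab b) : s - t ∈ stab b := by
  rw [mem_stab] at hs ht ⊢
  have : tr (s - t) (tr t b) = tr s b := by rw [tr_tr]; ring_nf
  rw [ht] at this
  rw [this, hs]

lemma add_mem_stab {b : Finset (ZMod v)} {s t : ZMod v}
    (hs : s ∈ stab b) (ht : t ∈ stab b) : s + t ∈ stab b := by
  have h1 : (0 : ZMod v) - t ∈ stab b := sub_mem_stab (zero_mem_stab b) ht
  have := sub_mem_stab hs h1
  simpa [sub_eq_add_neg] using this

lemma mem_orb_self (b : Finset (ZMod v)) : b ∈ orb b := by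
  refine Finset.mem_image.2 ⟨0, Finset.mem_univ _, tr_zero b⟩

lemma orb_eq_of_mem {b c : Finset (ZMod v)} (h : c ∈ orb b) : orb c = orb b := by
  rcases Finset.mem_image.1 h with ⟨s, _, rfl⟩
  apply Finset.Subset.antisymm
  · intro x hx
    rcases Finset.mem_image.1 hx with ⟨t, _, rfl⟩
    exact Finset.mem_image.2 ⟨s + t, Finset.mem_univ _, (tr_tr t s b).symm⟩
  · intro x hx
    rcases Finset.mem_image.1 hx with ⟨t, _, rfl⟩
    refine Finset.mem_image.2 ⟨t - s, Finset.mem_univ _, ?_⟩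
    rw [tr_tr]; ring_nf

/-- Orbit–stabilizer. -/
lemma orb_card_mul_stab_card (b : Finset (ZMod v)) :
    (orb b).card * (stab b).card = v := by
  have hfib : ∀ t : ZMod v, t ∈ (Finset.univ : Finset (ZMod v)) → tr t b ∈ orb b :=
    fun t _ => Finset.mem_image.2 ⟨t, Finset.mem_univ _, rfl⟩
  have h := Finset.card_eq_sum_card_fiberwise hfib
  have hcard : ∀ c ∈ orb b,
      (Finset.univ.filter (fun t => tr t b = c)).card = (stab b).card := by
    intro c hc
    rcases Finset.mem_image.1 hc with ⟨s, _, rfl⟩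
    have : Finset.univ.filter (fun t => tr t b = tr s b) = (stab b).image (· + s) := by
      ext t
      simp only [Finset.mem_filter, Finset.mem_univ, true_and, Finset.mem_image]
      constructor
      · intro ht
        refine ⟨t - s, mem_stab.2 (tr_eq_tr_iff.1 ht), by ring⟩
      · rintro ⟨u, hu, rfl⟩
        apply tr_eq_tr_iff.2
        simpa using mem_stab.1 hu
    rw [this, Finset.card_image_of_injective _ (add_left_injective s)]
  rw [Finset.sum_congr rfl hcard, Finset.sum_const, smul_eq_mul] at h
  have huniv : (Finset.univ : Finset (ZMod v)).card = v := by
    simp [ZMod.card v]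
  exact h.symm.trans huniv

variable (hcyc : ∀ b ∈ B, b.image (· + 1) ∈ B)

include hcyc in
lemma tr_mem : ∀ (t : ZMod v) (b : Finset (ZMod v)), b ∈ B → tr t b ∈ B := by
  have key : ∀ (n : ℕ) (b : Finset (ZMod v)), b ∈ B → tr (n : ZMod v) b ∈ B := by
    intro n
    induction n with
    | zero => intro b hb; simpa [tr_zero] using hb
    | succ n ih =>
      intro b hb
      have h1 := hcyc _ (ih b hb)
      have : (tr (n : ZMod v) b).image (· + 1) = tr ((n + 1 : ℕ) : ZMod v) b := by
        show tr 1 (tr (n : ZMod v) b) = _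
        rw [tr_tr]; push_cast; ring_nf
      rwa [this] at h1
  intro t b hb
  have := key t.val b hb
  rwa [ZMod.natCast_zmod_val] at this

include hcyc in
lemma orb_subset (b : Finset (ZMod v)) (hb : b ∈ B) : orb b ⊆ B := by
  intro c hc
  rcases Finset.mem_image.1 hc with ⟨t, _, rfl⟩
  exact tr_mem B hcyc t b hb

variable (hpair : ∀ p q : ZMod v, p ≠ q → ∃! b, b ∈ B ∧ p ∈ b ∧ q ∈ b)

include hcyc hpair in
/-- A block with nontrivial stabilizer is a coset of its stabilizer. -/
lemma block_eq_coset {b : Finset (ZMod v)} (hb : b ∈ B) {h : ZMod v} (hh : h ≠ 0)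
    (hhs : h ∈ stab b) {x : ZMod v} (hx : x ∈ b) :
    b = (stab b).image (x + ·) := by
  apply Finset.Subset.antisymm
  · intro y hy
    by_contra hyim
    have hys : y - x ∉ stab b := by
      intro hmem
      exact hyim (Finset.mem_image.2 ⟨y - x, hmem, by ring⟩)
    -- the second block through {x, x+h}
    set b' := tr (x - y) b with hb'def
    have hb' : b' ∈ B := tr_mem B hcyc _ b hb
    have hxb' : x ∈ b' := mem_tr.2 (by simpa using hy)
    have hyh : y + h ∈ b := by
      have := mem_stab.1 hhs
      rw [← this]
      exact Finset.mem_image.2 ⟨y, hy, rfl⟩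
    have hxhb' : x + h ∈ b' := mem_tr.2 (by simpa [add_sub_assoc] using (by
      have : x + h - (x - y) = y + h := by ring
      rw [this]; exact hyh : x + h - (x - y) ∈ b))
    have hxb : x ∈ b := hx
    have hxhb : x + h ∈ b := by
      have := mem_stab.1 hhs
      rw [← this]
      exact Finset.mem_image.2 ⟨x, hx, rfl⟩
    have hne : x ≠ x + h := by
      intro hEq
      apply hh
      have := hEq.symm
      simpa [add_eq_left] using this
    obtain ⟨c, _, hcu⟩ := hpair x (x + h) hne
    have h1 : b = c := hcu b ⟨hb, hxb, hxhb⟩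
    have h2 : b' = c := hcu b' ⟨hb', hxb', hxhb'⟩
    have hbb' : b' = b := h2.trans h1.symm
    have : x - y ∈ stab b := mem_stab.2 hbb'
    have : y - x ∈ stab b := by
      have := sub_mem_stab (zero_mem_stab b) this
      simpa using this
    exact hys this
  · intro z hz
    rcases Finset.mem_image.1 hz with ⟨s, hs, rfl⟩
    have := mem_stab.1 hs
    rw [← this]
    exact Finset.mem_image.2 ⟨x, hx, rfl⟩

include hcyc hpair in
lemma stab_card_eq {b : Finset (ZMod v)} (hb : b ∈ B) {h : ZMod v} (hh : h ≠ 0)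
    (hhs : h ∈ stab b) {x : ZMod v} (hx : x ∈ b) :
    (stab b).card = b.card := by
  have e := block_eq_coset B hcyc hpair hb hh hhs hx
  calc (stab b).card = ((stab b).image (x + ·)).card :=
        (Finset.card_image_of_injective _ (add_right_injective x)).symm
    _ = b.card := by rw [← e]

/-- Every element of the stabilizer is killed by its cardinality. -/
lemma stab_nsmul_zero {b : Finset (ZMod v)} {t : ZMod v} (ht : t ∈ stab b) :
    ((stab b).card : ZMod v) * t = 0 := by
  set S := stab b with hS
  have himg : S.image (· + t) = S := by
    apply Finset.eq_of_subset_of_card_le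
    · intro z hz
      rcases Finset.mem_image.1 hz with ⟨s, hs, rfl⟩
      exact add_mem_stab hs ht
    · rw [Finset.card_image_of_injective _ (add_left_injective t)]
  have hsum : ∑ s ∈ S, s = ∑ s ∈ S, (s + t) := by
    conv_lhs => rw [← himg]
    rw [Finset.sum_image (fun a _ b _ hab => by simpa using hab)]
  rw [Finset.sum_add_distrib, Finset.sum_const, left_eq_add, nsmul_eq_mul] at hsum
  exact hsum

include hcyc hpair in
/-- Two blocks with nontrivial stabilizers have equal stabilizers. -/
lemma stab_eq_stab {b₁ b₂ : Finset (ZMod v)} (hb₁ : b₁ ∈ B) (hb₂ : b₂ ∈ B)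
    {h₁ h₂ : ZMod v} (hh₁ : h₁ ≠ 0) (hs₁ : h₁ ∈ stab b₁) (hh₂ : h₂ ≠ 0) (hs₂ : h₂ ∈ stab b₂)
    (hcard : b₁.card = b₂.card) (hk2 : 2 ≤ b₁.card) :
    stab b₁ = stab b₂ := by
  set k := b₁.card with hkdef
  obtain ⟨x₁, hx₁⟩ : b₁.Nonempty := Finset.card_pos.1 (by omega)
  obtain ⟨x₂, hx₂⟩ : b₂.Nonempty := Finset.card_pos.1 (by omega)
  have hc₁ : (stab b₁).card = k := stab_card_eq B hcyc hpair hb₁ hh₁ hs₁ hx₁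
  have hc₂ : (stab b₂).card = k := by
    have e := stab_card_eq B hcyc hpair hb₂ hh₂ hs₂ hx₂
    rw [e, ← hcard]
  set d := (orb b₁).card with hddef
  have hdk : d * k = v := by rw [← hc₁]; exact orb_card_mul_stab_card b₁
  have hd0 : 0 < d := by
    rcases Nat.eq_zero_or_pos d with h0 | h0
    · exact absurd (by rw [← hdk, h0, zero_mul] : v = 0) (NeZero.ne v)
    · exact h0
  have hk0 : 0 < k := by omega
  -- the set of solutions of k • t = 0
  set K : Finset (ZMod v) := Finset.univ.filter (fun t => (k : ZMod v) * t = 0) with hKdef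
  have hsubK : ∀ (b : Finset (ZMod v)), (stab b).card = k → stab b ⊆ K := by
    intro b hcb t ht
    refine Finset.mem_filter.2 ⟨Finset.mem_univ _, ?_⟩
    have := stab_nsmul_zero (b := b) ht
    rwa [hcb] at this
  have hdd : ∀ t : ZMod v, t ∈ K → d ∣ t.val := by
    intro t ht
    rcases Finset.mem_filter.1 ht with ⟨-, htz⟩
    have hdvd : v ∣ k * t.val := by
      rw [← ZMod.natCast_eq_zero_iff]
      push_cast
      rw [ZMod.natCast_zmod_val]
      exact htz
    rcases hdvd with ⟨c, hc⟩
    refine ⟨c, ?_⟩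
    have h2 : k * (d * c) = k * t.val := by
      calc k * (d * c) = (d * k) * c := by ring
        _ = v * c := by rw [hdk]
        _ = k * t.val := hc.symm
    exact (Nat.eq_of_mul_eq_mul_left hk0 h2).symm
  have hKcard : K.card ≤ k := by
    have hle : K.card ≤ (Finset.range k).card := by
      apply Finset.card_le_card_of_injOn (fun t => t.val / d)
      · intro t ht
        refine Finset.mem_range.2 ?_
        have hlt : t.val < v := ZMod.val_lt t
        rw [Nat.div_lt_iff_lt_mul hd0, mul_comm k d, hdk]
        exact hlt
      · intro t₁ ht₁ t₂ ht₂ hEq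
        have hEq' : t₁.val / d = t₂.val / d := hEq
        have h1 : d ∣ t₁.val := hdd t₁ ht₁
        have h2 : d ∣ t₂.val := hdd t₂ ht₂
        have hv : t₁.val = t₂.val := by
          have e1 : t₁.val = d * (t₁.val / d) := (Nat.mul_div_cancel' h1).symm
          have e2 : t₂.val = d * (t₂.val / d) := (Nat.mul_div_cancel' h2).symm
          rw [e1, e2, hEq']
        calc t₁ = (t₁.val : ZMod v) := (ZMod.natCast_zmod_val t₁).symm
          _ = (t₂.val : ZMod v) := by rw [hv]
          _ = t₂ := ZMod.natCast_zmod_val t₂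
    simpa using hle
  have e₁ : stab b₁ = K :=
    Finset.eq_of_subset_of_card_le (hsubK b₁ hc₁) (by omega)
  have e₂ : stab b₂ = K :=
    Finset.eq_of_subset_of_card_le (hsubK b₂ hc₂) (by omega)
  rw [e₁, e₂]

include hcyc hpair in
lemma orb_eq_orb {b₁ b₂ : Finset (ZMod v)} (hb₁ : b₁ ∈ B) (hb₂ : b₂ ∈ B)
    {h₁ h₂ : ZMod v} (hh₁ : h₁ ≠ 0) (hs₁ : h₁ ∈ stab b₁) (hh₂ : h₂ ≠ 0) (hs₂ : h₂ ∈ stab b₂)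
    (hcard : b₁.card = b₂.card) (hk2 : 2 ≤ b₁.card) :
    orb b₁ = orb b₂ := by
  obtain ⟨x₁, hx₁⟩ : b₁.Nonempty := Finset.card_pos.1 (by omega)
  obtain ⟨x₂, hx₂⟩ : b₂.Nonempty := Finset.card_pos.1 (by omega)
  have e₁ : b₁ = (stab b₁).image (x₁ + ·) :=
    block_eq_coset B hcyc hpair hb₁ hh₁ hs₁ hx₁
  have e₂ : b₂ = (stab b₂).image (x₂ + ·) :=
    block_eq_coset B hcyc hpair hb₂ hh₂ hs₂ hx₂
  have hstab : stab b₁ = stab b₂ :=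
    stab_eq_stab B hcyc hpair hb₁ hb₂ hh₁ hs₁ hh₂ hs₂ hcard hk2
  have htr : tr (x₂ - x₁) b₁ = b₂ := by
    rw [e₁, e₂, hstab]
    unfold tr
    rw [Finset.image_image]
    apply Finset.image_congr
    intro s _
    simp only [Function.comp_apply]
    ring
  have : b₂ ∈ orb b₁ := by
    rw [← htr]
    exact Finset.mem_image.2 ⟨x₂ - x₁, Finset.mem_univ _, rfl⟩
  exact (orb_eq_of_mem this).symm

end Main

end Stmt7

open Stmt7 in
/-- If a cyclic `S(2,k,v)` exists, then `v ≡ 1` or `v ≡ k (mod k(k-1))`. -/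
theorem stmt_7 (v k : ℕ) [NeZero v] (hk : 2 ≤ k)
    (B : Finset (Finset (ZMod v)))
    (hblocks : ∀ b ∈ B, b.card = k)
    (hpair : ∀ p q : ZMod v, p ≠ q → ∃! b, b ∈ B ∧ p ∈ b ∧ q ∈ b)
    (hcyc : ∀ b ∈ B, b.image (· + 1) ∈ B) :
    ∃ m : ℕ, v = m * (k * (k - 1)) + 1 ∨ v = m * (k * (k - 1)) + k := by
  classical
  have hv1 : 1 ≤ v := Nat.one_le_iff_ne_zero.2 (NeZero.ne v)
  -- Step 1: pair counting: B.card * (k*(k-1)) = v*(v-1)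
  have hcount : B.card * (k * (k - 1)) = v * (v - 1) := by
    set f : ZMod v × ZMod v → Finset (ZMod v) := fun p =>
      if h : p.1 ≠ p.2 then (hpair p.1 p.2 h).choose else ∅ with hfdef
    have hfmem : ∀ p : ZMod v × ZMod v, p ∈ (Finset.univ : Finset (ZMod v)).offDiag →
        f p ∈ B := by
      intro p hp
      have hne : p.1 ≠ p.2 := (Finset.mem_offDiag.1 hp).2.2
      simp only [hfdef, dif_pos hne]
      exact (hpair p.1 p.2 hne).choose_spec.1.1
    have h := Finset.card_eq_sum_card_fiberwise hfmem
    have hfib : ∀ b ∈ B,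
        ((Finset.univ : Finset (ZMod v)).offDiag.filter (fun p => f p = b)).card
          = k * (k - 1) := by
      intro b hb
      have hfb : (Finset.univ : Finset (ZMod v)).offDiag.filter (fun p => f p = b)
          = b.offDiag := by
        ext p
        simp only [Finset.mem_filter, Finset.mem_offDiag, Finset.mem_univ, true_and]
        constructor
        · rintro ⟨hne, hfp⟩
          have := (hpair p.1 p.2 hne).choose_spec.1
          rw [hfdef] at hfp
          simp only [dif_pos hne] at hfp
          rw [hfp] at this
          exact ⟨this.2.1, this.2.2, hne⟩
        · rintro ⟨h1, h2, hne⟩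
          refine ⟨hne, ?_⟩
          simp only [hfdef, dif_pos hne]
          exact ((hpair p.1 p.2 hne).choose_spec.2 b ⟨hb, h1, h2⟩).symm
      rw [hfb, Finset.offDiag_card, hblocks b hb]
      have : k * k - k = k * (k - 1) := by
        cases k with
        | zero => simp
        | succ n => simp [Nat.mul_succ, Nat.succ_mul, Nat.mul_sub]
      exact this
    rw [Finset.sum_congr rfl hfib, Finset.sum_const, smul_eq_mul] at h
    have huniv : ((Finset.univ : Finset (ZMod v)).offDiag).card = v * (v - 1) := by
      rw [Finset.offDiag_card]
      have hcv : (Finset.univ : Finset (ZMod v)).card = v := by simp [ZMod.card v]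
      rw [hcv]
      cases v with
      | zero => simp
      | succ n => simp [Nat.succ_mul, Nat.mul_succ, Nat.mul_sub]
    rw [huniv] at h
    exact h.symm
  -- Step 2: orbit decomposition
  set R : Finset (Finset (Finset (ZMod v))) := B.image orb with hRdef
  have horbsub : ∀ b ∈ B, orb b ⊆ B := fun b hb => orb_subset B hcyc b hb
  have hBU : B = R.biUnion id := by
    apply Finset.Subset.antisymm
    · intro b hb
      exact Finset.mem_biUnion.2 ⟨orb b, Finset.mem_image.2 ⟨b, hb, rfl⟩, mem_orb_self b⟩
    · intro c hc
      rcases Finset.mem_biUnion.1 hc with ⟨O, hO, hcO⟩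
      rcases Finset.mem_image.1 hO with ⟨b, hb, rfl⟩
      exact horbsub b hb hcO
  have hdisj : ∀ O₁ ∈ R, ∀ O₂ ∈ R, O₁ ≠ O₂ → Disjoint (id O₁) (id O₂) := by
    intro O₁ hO₁ O₂ hO₂ hne
    rcases Finset.mem_image.1 hO₁ with ⟨b₁, _, rfl⟩
    rcases Finset.mem_image.1 hO₂ with ⟨b₂, _, rfl⟩
    rw [Finset.disjoint_left]
    intro c hc1 hc2
    exact hne ((orb_eq_of_mem hc1).symm.trans (orb_eq_of_mem hc2))
  have hcardB : B.card = ∑ O ∈ R, O.card := by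
    rw [hBU, Finset.card_biUnion hdisj]
    rfl
  -- case on the existence of a short orbit
  by_cases hshort : ∃ b ∈ B, ∃ t : ZMod v, t ≠ 0 ∧ t ∈ stab b
  · -- one short orbit
    obtain ⟨b₀, hb₀, t₀, ht₀, hts₀⟩ := hshort
    have hb₀card : b₀.card = k := hblocks b₀ hb₀
    obtain ⟨x₀, hx₀⟩ : b₀.Nonempty := Finset.card_pos.1 (by omega)
    set Ω := orb b₀ with hΩdef
    have hΩR : Ω ∈ R := Finset.mem_image.2 ⟨b₀, hb₀, rfl⟩
    have hstabcard : (stab b₀).card = k := by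
      rw [stab_card_eq B hcyc hpair hb₀ ht₀ hts₀ hx₀, hb₀card]
    have hΩcard : Ω.card * k = v := by
      rw [← hstabcard]; exact orb_card_mul_stab_card b₀
    have hrest : ∀ O ∈ R.erase Ω, O.card = v := by
      intro O hO
      have hOR : O ∈ R := Finset.mem_of_mem_erase hO
      have hOne : O ≠ Ω := Finset.ne_of_mem_erase hO
      rcases Finset.mem_image.1 hOR with ⟨b, hb, rfl⟩
      have hstabtriv : stab b = {0} := by
        by_contra htriv
        have : ∃ t : ZMod v, t ≠ 0 ∧ t ∈ stab b := by
          by_contra hno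
          push_neg at hno
          apply htriv
          apply Finset.Subset.antisymm
          · intro t ht
            rcases eq_or_ne t 0 with rfl | htne
            · simp
            · exact absurd ht (hno t htne)
          · intro t ht
            rw [Finset.mem_singleton] at ht
            subst ht
            exact zero_mem_stab b
        obtain ⟨t, htne, hts⟩ := this
        have : orb b = orb b₀ :=
          orb_eq_orb B hcyc hpair hb hb₀ htne hts ht₀ hts₀
            (by rw [hblocks b hb, hb₀card]) (by rw [hblocks b hb]; omega)
        exact hOne this
      have := orb_card_mul_stab_card b
      rw [hstabtriv] at this
      simpa using this
    have hsum : B.card = Ω.card + (R.erase Ω).card * v := by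
      rw [hcardB, ← Finset.add_sum_erase _ _ hΩR]
      congr 1
      rw [Finset.sum_congr rfl hrest, Finset.sum_const, smul_eq_mul]
    set w := Ω.card with hwdef
    set f := (R.erase Ω).card with hfdef2
    refine ⟨f, Or.inr ?_⟩
    -- arithmetic
    have key : v * ((k - 1) + f * (k * (k - 1))) = v * (v - 1) := by
      have expand : (w + f * v) * (k * (k - 1))
          = (w * k) * (k - 1) + v * (f * (k * (k - 1))) := by ring
      calc v * ((k - 1) + f * (k * (k - 1)))
          = v * (k - 1) + v * (f * (k * (k - 1))) := by ring
        _ = (w * k) * (k - 1) + v * (f * (k * (k - 1))) := by rw [hΩcard]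
        _ = (w + f * v) * (k * (k - 1)) := by rw [expand]
        _ = B.card * (k * (k - 1)) := by rw [← hsum]
        _ = v * (v - 1) := hcount
    have hveq : (k - 1) + f * (k * (k - 1)) = v - 1 :=
      Nat.eq_of_mul_eq_mul_left (by omega) key
    obtain ⟨M, hM⟩ : ∃ M, M = f * (k * (k - 1)) := ⟨_, rfl⟩
    rw [← hM] at hveq ⊢
    omega
  · -- no short orbit: all orbits full
    push_neg at hshort
    have hall : ∀ O ∈ R, O.card = v := by
      intro O hO
      rcases Finset.mem_image.1 hO with ⟨b, hb, rfl⟩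
      have hstabtriv : stab b = {0} := by
        apply Finset.Subset.antisymm
        · intro t ht
          rcases eq_or_ne t 0 with rfl | htne
          · simp
          · exact absurd ht (hshort b hb t htne)
        · intro t ht
          rw [Finset.mem_singleton] at ht
          subst ht
          exact zero_mem_stab b
      have := orb_card_mul_stab_card b
      rw [hstabtriv] at this
      simpa using this
    have hsum : B.card = R.card * v := by
      rw [hcardB, Finset.sum_congr rfl hall, Finset.sum_const, smul_eq_mul]
    refine ⟨R.card, Or.inl ?_⟩
    have key : v * (R.card * (k * (k - 1))) = v * (v - 1) := by
      calc v * (R.card * (k * (k - 1)))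
          = (R.card * v) * (k * (k - 1)) := by ring
        _ = B.card * (k * (k - 1)) := by rw [← hsum]
        _ = v * (v - 1) := hcount
    have hveq : R.card * (k * (k - 1)) = v - 1 :=
      Nat.eq_of_mul_eq_mul_left (by omega) key
    obtain ⟨M, hM⟩ : ∃ M, M = R.card * (k * (k - 1)) := ⟨_, rfl⟩
    rw [← hM] at hveq ⊢
    omega
end

section
/- Let v ≡ 1 (mod k(k-1)) and let S be a system of representatives of the block orbits of a cyclic S(2,k,v). Then every nonzero element of Z_v occurs exactly once as a difference b - b' of two distinct points of some block in S. -/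
/-!
Translating a block by `t` translates its difference pairs by `(t, t)`, so the number of pairs
`(x, y)` with `x ≠ y`, `x - y = d` in a block depends only on its orbit. Summed over all blocks
this number is `v`, because each of the `v` pairs with difference `d ≠ 0` lies in exactly one
block. When `v ≡ 1 (mod k(k-1))`, `k` is prime to `v`, so by Lagrange the stabilizer of a
`k`-subset of `ZMod v` is trivial: every orbit has exactly `v` blocks. Hence the sum over all
blocks is `v` times the sum over the representatives, and the latter is `1`.
-/

open Finset AddAction
open scoped Pointwise

section Stabilizer

variable {G : Type*} [AddCommGroup G] [DecidableEq G]

theorem natCard_stabilizer_dvd_card (s : Finset G) : Nat.card (stabilizer G s) ∣ #s := by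
  -- `s` is a union of cosets of its stabilizer
  have h := AddSubgroup.card_add_eq_card_addSubgroup_add_card_quotient (stabilizer G s) (s : Set G)
  rw [← stabilizer_coe_finset, add_stabilizer_self, Nat.card_coe_set_eq, Set.ncard_coe_finset,
    stabilizer_coe_finset] at h
  exact ⟨_, h⟩

theorem stabilizer_eq_bot_of_coprime {s : Finset G} (h : Nat.Coprime #s (Nat.card G)) :
    stabilizer G s = ⊥ :=
  AddSubgroup.eq_bot_of_card_eq _ <|
    Nat.eq_one_of_dvd_coprimes h (natCard_stabilizer_dvd_card s)
      (AddSubgroup.card_addSubgroup_dvd_card _)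

end Stabilizer

theorem Nat.coprime_of_mod_mul_eq_one {v k m : ℕ} (h : v % (k * m) = 1) : Nat.Coprime k v :=
  Nat.dvd_one.mp <|
    h ▸ (Nat.dvd_mod_iff ((Nat.gcd_dvd_left k v).mul_right m)).mpr (Nat.gcd_dvd_right k v)

section OrbitSum

variable {G M : Type*} [AddGroup G] [Fintype G] [DecidableEq G] [AddCommMonoid M]

theorem sum_eq_card_smul_sum_of_orbit_reps {B S : Finset (Finset G)}
    (hB : ∀ s ∈ S, ∀ t : G, t +ᵥ s ∈ B) (hrep : ∀ b ∈ B, ∃! s, s ∈ S ∧ ∃ t : G, b = t +ᵥ s)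
    (hfree : ∀ s ∈ S, stabilizer G s = ⊥) (f : Finset G → M) (hf : ∀ (t : G) b, f (t +ᵥ b) = f b) :
    ∑ b ∈ B, f b = Fintype.card G • ∑ s ∈ S, f s := by
  have htrans : ∑ p ∈ S ×ˢ (univ : Finset G), f (p.2 +ᵥ p.1) = ∑ b ∈ B, f b := by
    refine sum_bij (fun p _ => p.2 +ᵥ p.1) (fun p hp => hB _ (mem_product.mp hp).1 _) ?_ ?_
      (fun _ _ => rfl)
    · rintro ⟨s₁, t₁⟩ hp₁ ⟨s₂, t₂⟩ hp₂ (heq : t₁ +ᵥ s₁ = t₂ +ᵥ s₂)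
      simp only [mem_product, mem_univ, and_true] at hp₁ hp₂
      obtain ⟨s, -, huniq⟩ := hrep _ (hB _ hp₁ t₁)
      obtain rfl : s₁ = s₂ := (huniq s₁ ⟨hp₁, t₁, rfl⟩).trans (huniq s₂ ⟨hp₂, t₂, heq⟩).symm
      have hstab : -t₂ + t₁ ∈ stabilizer G s₁ := by
        rw [mem_stabilizer_iff, add_vadd, heq, neg_vadd_vadd]
      rw [hfree s₁ hp₁, AddSubgroup.mem_bot, neg_add_eq_zero] at hstab
      rw [hstab]
    · intro b hb
      obtain ⟨s, ⟨hs, t, rfl⟩, -⟩ := hrep b hb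
      exact ⟨(s, t), mem_product.mpr ⟨hs, mem_univ t⟩, rfl⟩
  rw [← htrans, sum_product, smul_sum]
  simp [hf]

end OrbitSum

theorem Finset.image_add_right_eq_vadd {G : Type*} [AddCommMagma G] [DecidableEq G]
    (b : Finset G) (t : G) : b.image (· + t) = t +ᵥ b := by
  simp only [vadd_finset_def, vadd_eq_add, add_comm]

theorem ZMod.vadd_mem_of_one_vadd_mem {v : ℕ} [NeZero v] {B : Finset (Finset (ZMod v))}
    (hcyc : ∀ b ∈ B, (1 : ZMod v) +ᵥ b ∈ B) {b : Finset (ZMod v)} (hb : b ∈ B) (t : ZMod v) :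
    t +ᵥ b ∈ B := by
  rw [← ZMod.natCast_zmod_val t]
  induction t.val with
  | zero => simpa using hb
  | succ n ih =>
    rw [Nat.cast_succ, add_comm, add_vadd]
    exact hcyc _ ih

section Differences

variable {G : Type*} [AddCommGroup G] [DecidableEq G]

def pairsWithDiff (b : Finset G) (d : G) : Finset (G × G) :=
  (b ×ˢ b).filter fun p => p.1 ≠ p.2 ∧ p.1 - p.2 = d

theorem pairsWithDiff_vadd (t : G) (b : Finset G) (d : G) :
    pairsWithDiff (t +ᵥ b) d = (t, t) +ᵥ pairsWithDiff b d := by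
  ext ⟨x, y⟩
  simp [pairsWithDiff, ← Finset.neg_vadd_mem_iff]

theorem card_pairsWithDiff_vadd (t : G) (b : Finset G) (d : G) :
    #(pairsWithDiff (t +ᵥ b) d) = #(pairsWithDiff b d) := by
  rw [pairsWithDiff_vadd, card_vadd_finset]

theorem card_pairsWithDiff_univ [Fintype G] {d : G} (hd : d ≠ 0) :
    #(pairsWithDiff univ d) = Fintype.card G := by
  refine card_nbij' Prod.snd (fun q => (q + d, q)) (fun _ _ => mem_coe.mpr (mem_univ _)) ?_ ?_
    (fun _ _ => rfl)
  · intro q _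
    simp [pairsWithDiff, hd]
  · rintro ⟨x, y⟩ hp
    obtain ⟨-, -, rfl⟩ := mem_filter.mp (mem_coe.mp hp)
    simp

theorem sum_card_pairsWithDiff [Fintype G] {B : Finset (Finset G)}
    (hpair : ∀ p q : G, p ≠ q → ∃! b, b ∈ B ∧ p ∈ b ∧ q ∈ b) {d : G} (hd : d ≠ 0) :
    ∑ b ∈ B, #(pairsWithDiff b d) = Fintype.card G := by
  set r : Finset G → G × G → Prop := fun b p => p.1 ∈ b ∧ p.2 ∈ b
  have hblock (b : Finset G) : pairsWithDiff b d = (pairsWithDiff univ d).bipartiteAbove r b := by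
    ext p
    simp only [pairsWithDiff, bipartiteAbove, r, mem_filter, mem_product, mem_univ, true_and]
    tauto
  have hunique : ∀ p ∈ pairsWithDiff univ d, #(B.bipartiteBelow r p) = 1 := by
    intro p hp
    obtain ⟨b, hb, huniq⟩ := hpair p.1 p.2 (mem_filter.mp hp).2.1
    refine card_eq_one.mpr ⟨b, ext fun b' => ?_⟩
    simp only [bipartiteBelow, r, mem_filter, mem_singleton]
    exact ⟨huniq b', fun h => h ▸ hb⟩
  rw [sum_congr rfl fun b _ => congrArg card (hblock b),
    sum_card_bipartiteAbove_eq_sum_card_bipartiteBelow, sum_congr rfl hunique, sum_const,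
    smul_eq_mul, mul_one, card_pairsWithDiff_univ hd]

end Differences

theorem stmt_9_general (v k : ℕ) [NeZero v] (hv : v % (k * (k - 1)) = 1)
    (B : Finset (Finset (ZMod v)))
    (hblocks : ∀ b ∈ B, b.card = k)
    (hpair : ∀ p q : ZMod v, p ≠ q → ∃! b, b ∈ B ∧ p ∈ b ∧ q ∈ b)
    (hcyc : ∀ b ∈ B, b.image (· + 1) ∈ B)
    (S : Finset (Finset (ZMod v))) (hS : S ⊆ B)
    (hrep : ∀ b ∈ B, ∃! s, s ∈ S ∧ ∃ t : ZMod v, b = s.image (· + t)) :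
    ∀ d : ZMod v, d ≠ 0 →
      (∑ s ∈ S, ((s ×ˢ s).filter fun p => p.1 ≠ p.2 ∧ p.1 - p.2 = d).card) = 1 := by
  intro d hd
  simp only [image_add_right_eq_vadd] at hcyc hrep
  have hfree (s : Finset (ZMod v)) (hs : s ∈ S) : stabilizer (ZMod v) s = ⊥ := by
    refine stabilizer_eq_bot_of_coprime ?_
    rw [hblocks s (hS hs), Nat.card_zmod]
    exact Nat.coprime_of_mod_mul_eq_one hv
  have horbit := sum_eq_card_smul_sum_of_orbit_reps
    (fun s hs t => ZMod.vadd_mem_of_one_vadd_mem hcyc (hS hs) t) hrep hfree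
    (fun b => #(pairsWithDiff b d)) (fun t b => card_pairsWithDiff_vadd t b d)
  rw [sum_card_pairsWithDiff hpair hd, ZMod.card, smul_eq_mul, eq_comm,
    Nat.mul_eq_left (NeZero.ne v)] at horbit
  exact horbit

/-- If `v ≡ 1 (mod k(k-1))` and `S` is a system of representatives of the block orbits
of a cyclic `S(2,k,v)`, then every nonzero difference occurs exactly once among
ordered pairs of distinct points of blocks of `S`. -/
theorem stmt_9 (v k : ℕ) [NeZero v] (hk : 2 ≤ k) (hv : v % (k * (k - 1)) = 1)
    (B : Finset (Finset (ZMod v)))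
    (hblocks : ∀ b ∈ B, b.card = k)
    (hpair : ∀ p q : ZMod v, p ≠ q → ∃! b, b ∈ B ∧ p ∈ b ∧ q ∈ b)
    (hcyc : ∀ b ∈ B, b.image (· + 1) ∈ B)
    (S : Finset (Finset (ZMod v))) (hS : S ⊆ B)
    (hrep : ∀ b ∈ B, ∃! s, s ∈ S ∧ ∃ t : ZMod v, b = s.image (· + t)) :
    ∀ d : ZMod v, d ≠ 0 →
      (∑ s ∈ S, ((s ×ˢ s).filter fun p => p.1 ≠ p.2 ∧ p.1 - p.2 = d).card) = 1 :=
  stmt_9_general v k hv B hblocks hpair hcyc S hS hrep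
end

section
/- If gcd(v,(k-1)!) = 1, then there exists a cyclic (v,k)-difference matrix. -/
lemma aux_unit_10 (v k : ℕ) (hv : 0 < v) (h : Nat.gcd v (Nat.factorial (k - 1)) = 1)
    (r r' : Fin k) (hlt : (r' : ℕ) < (r : ℕ)) :
    IsUnit (((r : ℕ) : ZMod v) - ((r' : ℕ) : ZMod v)) := by
  haveI : NeZero v := ⟨hv.ne'⟩
  have hsub : (((r : ℕ) - (r' : ℕ) : ℕ) : ZMod v)
      = ((r : ℕ) : ZMod v) - ((r' : ℕ) : ZMod v) := by
    push_cast [Nat.cast_sub hlt.le]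
    ring
  rw [← hsub]
  set d := (r : ℕ) - (r' : ℕ) with hd
  have hdpos : 0 < d := Nat.sub_pos_of_lt hlt
  have hdle : d ≤ k - 1 := by
    have := r.isLt
    omega
  have hdvd : d ∣ Nat.factorial (k - 1) := Nat.dvd_factorial hdpos hdle
  have hco : Nat.Coprime d v :=
    ((Nat.Coprime.coprime_dvd_right hdvd h).symm)
  exact (ZMod.isUnit_iff_coprime d v).mpr hco

/-- If `gcd(v,(k-1)!) = 1`, then there exists a cyclic `(v,k)`-difference matrix. -/
theorem stmt_10 (v k : ℕ) (hv : 0 < v) (h : Nat.gcd v (Nat.factorial (k - 1)) = 1) :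
    ∃ A : Fin k → Fin v → ZMod v,
      ∀ r r' : Fin k, r ≠ r' → Function.Bijective fun j => A r j - A r' j := by
  haveI : NeZero v := ⟨hv.ne'⟩
  refine ⟨fun i j => ((i : ℕ) : ZMod v) * ((j : ℕ) : ZMod v), ?_⟩
  intro r r' hne
  set c : ZMod v := ((r : ℕ) : ZMod v) - ((r' : ℕ) : ZMod v) with hc
  have hcu : IsUnit c := by
    rcases lt_or_gt_of_ne (fun hval => hne (Fin.ext hval) : (r : ℕ) ≠ (r' : ℕ)) with hlt | hlt
    · have := aux_unit_10 v k hv h r' r hlt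
      rw [hc]
      have : IsUnit (-(((r' : ℕ) : ZMod v) - ((r : ℕ) : ZMod v))) := this.neg
      simpa using this
    · exact aux_unit_10 v k hv h r r' hlt
  have hfun : (fun j : Fin v => ((r : ℕ) : ZMod v) * ((j : ℕ) : ZMod v)
      - ((r' : ℕ) : ZMod v) * ((j : ℕ) : ZMod v)) = fun j : Fin v => c * ((j : ℕ) : ZMod v) := by
    funext j
    rw [hc]; ring
  show Function.Bijective (fun j : Fin v => ((r : ℕ) : ZMod v) * ((j : ℕ) : ZMod v)
      - ((r' : ℕ) : ZMod v) * ((j : ℕ) : ZMod v))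
  rw [hfun]
  have : Function.Injective (fun j : Fin v => c * ((j : ℕ) : ZMod v)) := by
    intro j₁ j₂ hj
    have h2 : ((j₁ : ℕ) : ZMod v) = ((j₂ : ℕ) : ZMod v) := hcu.mul_left_cancel hj
    have := congrArg ZMod.val h2
    rwa [ZMod.val_cast_of_lt j₁.isLt, ZMod.val_cast_of_lt j₂.isLt, ← Fin.ext_iff] at this
  exact (Fintype.bijective_iff_injective_and_card _).mpr
    ⟨this, by simp [ZMod.card]⟩
end

section
/- If there exist a cyclic (v,k)-difference matrix and a cyclic (w,k)-difference matrix, then there exists a cyclic (vw,k)-difference matrix. -/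
/-- A cyclic `(v,k)`-difference matrix: column-wise differences of any two distinct
rows hit every element of `ZMod v` exactly once. -/
def IsCyclicDiffMatrix (v k : ℕ) (A : Fin k → Fin v → ZMod v) : Prop :=
  ∀ r r' : Fin k, r ≠ r' → Function.Bijective fun j => A r j - A r' j

/-- Product construction for cyclic difference matrices. -/
theorem stmt_11 (v w k : ℕ)
    (h1 : ∃ A, IsCyclicDiffMatrix v k A) (h2 : ∃ A, IsCyclicDiffMatrix w k A) :
    ∃ A, IsCyclicDiffMatrix (v * w) k A := by
  obtain ⟨A, hA⟩ := h1
  obtain ⟨B, hB⟩ := h2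
  rcases Nat.lt_or_ge k 2 with hk | hk
  · refine ⟨fun _ _ => 0, fun r r' hrr => absurd (Fin.ext ?_) hrr⟩
    have := r.isLt; have := r'.isLt; omega
  -- k ≥ 2 : pick two distinct rows
  have hr01 : (⟨0, by omega⟩ : Fin k) ≠ ⟨1, by omega⟩ := by simp [Fin.ext_iff]
  rcases Nat.eq_zero_or_pos v with rfl | hv
  · obtain ⟨j, -⟩ := (hA _ _ hr01).surjective 0
    exact j.elim0
  rcases Nat.eq_zero_or_pos w with rfl | hw
  · obtain ⟨j, -⟩ := (hB _ _ hr01).surjective 0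
    exact j.elim0
  haveI : NeZero v := ⟨by omega⟩
  haveI : NeZero w := ⟨by omega⟩
  haveI : NeZero (v * w) := ⟨by positivity⟩
  refine ⟨fun r j =>
    (((A r (finProdFinEquiv.symm j).1).val + v * (B r (finProdFinEquiv.symm j).2).val : ℕ) :
      ZMod (v * w)), fun r r' hrr => ?_⟩
  rw [Fintype.bijective_iff_injective_and_card]
  refine ⟨?_, by simp [ZMod.card]⟩
  intro j j' h
  dsimp only at h
  set p := finProdFinEquiv.symm j with hp
  set p' := finProdFinEquiv.symm j' with hp'
  suffices hpe : p = p' by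
    rw [hp, hp'] at hpe
    exact finProdFinEquiv.symm.injective hpe
  -- Step 1: project to ZMod v to identify the first coordinates
  have h1 := congrArg (ZMod.castHom (dvd_mul_right v w) (ZMod v)) h
  simp only [map_sub, map_natCast] at h1
  push_cast [ZMod.natCast_self, ZMod.natCast_val, ZMod.cast_id] at h1
  ring_nf at h1
  have hp1 : p.1 = p'.1 := (hA r r' hrr).injective h1
  -- Step 2: cancel the first coordinates and work modulo w
  rw [hp1] at h
  have h2 : ((v * (B r p.2).val + v * (B r' p'.2).val : ℕ) : ZMod (v * w)) =
      ((v * (B r p'.2).val + v * (B r' p.2).val : ℕ) : ZMod (v * w)) := by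
    push_cast
    push_cast at h
    linear_combination h
  rw [ZMod.natCast_eq_natCast_iff] at h2
  have h3 : v * ((B r p.2).val + (B r' p'.2).val) ≡
      v * ((B r p'.2).val + (B r' p.2).val) [MOD v * w] := by
    rw [Nat.mul_add, Nat.mul_add]; exact h2
  have hd := (Nat.modEq_iff_dvd).mp h3
  have hd2 : (w:ℤ) ∣ (((B r p'.2).val + (B r' p.2).val : ℕ) : ℤ) -
      (((B r p.2).val + (B r' p'.2).val : ℕ) : ℤ) := by
    have hv0 : (v:ℤ) ≠ 0 := by exact_mod_cast hv.ne'
    rw [← mul_dvd_mul_iff_left hv0]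
    obtain ⟨t, ht⟩ := hd
    exact ⟨t, by push_cast at ht ⊢; linarith⟩
  have h4 : ((B r p.2).val + (B r' p'.2).val) ≡ ((B r p'.2).val + (B r' p.2).val) [MOD w] :=
    (Nat.modEq_iff_dvd).mpr hd2
  have h5 : (((B r p.2).val + (B r' p'.2).val : ℕ) : ZMod w) =
      (((B r p'.2).val + (B r' p.2).val : ℕ) : ZMod w) :=
    (ZMod.natCast_eq_natCast_iff _ _ _).mpr h4
  push_cast [ZMod.natCast_val, ZMod.cast_id', id_eq] at h5
  have h6 : B r p.2 - B r' p.2 = B r p'.2 - B r' p'.2 := by linear_combination h5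
  have hp2 : p.2 = p'.2 := (hB r r' hrr).injective h6
  exact Prod.ext hp1 hp2
end

section
/- Suppose (V,B) is a cyclic 5-even-free S(2,3,3v) and (W,C) is a cyclic 5-even-free S(2,3,3w) with w odd. Let S_B be a system of ordered-triple representatives of block orbits of B with S the representative of the orbit of {0,v,2v}, and S_C a system of representatives of orbits of C. Then D0 = {{x, y+3iv, z+6iv} : (x,y,z) ∈ S_B \ {S}, i ∈ {0,...,w-1}} together with D1 = {{av, bv, cv} : {a,b,c} ∈ S_C} is a system of representatives of the block orbits of a cyclic S(2,3,3vw) on Z_{3vw}. -/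
namespace Stmt17
set_option linter.unusedSectionVars false
set_option linter.unnecessarySimpa false


lemma valcast {n : ℕ} [NeZero n] (a : ZMod n) : ((a.val : ℕ) : ZMod n) = a := by
  simp [ZMod.natCast_val, ZMod.cast_id]

lemma image_add_add {n : ℕ} (b : Finset (ZMod n)) (s t : ZMod n) :
    (b.image (· + s)).image (· + t) = b.image (· + (s + t)) := by
  rw [Finset.image_image]; apply Finset.image_congr; intro x _; simp [Function.comp, add_assoc]

lemma trans_closed {n : ℕ} [NeZero n] (B : Finset (Finset (ZMod n)))
    (hB : ∀ b ∈ B, b.image (· + 1) ∈ B) :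
    ∀ b ∈ B, ∀ t : ZMod n, b.image (· + t) ∈ B := by
  have key : ∀ (m : ℕ), ∀ b ∈ B, b.image (· + (m : ZMod n)) ∈ B := by
    intro m
    induction m with
    | zero => intro b hb; simpa using hb
    | succ k ih =>
      intro b hb
      have := hB _ (ih b hb)
      rw [image_add_add] at this
      convert this using 2
      push_cast; ring
  intro b hb t
  have := key t.val b hb
  rwa [valcast] at this

lemma stab3 {G : Type*} [AddCommGroup G] [DecidableEq G] {b : Finset G} (h3 : b.card = 3)
    {c : G} (hinv : b.image (· + c) = b) : c + c + c = 0 := by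
  have hsum : ∑ x ∈ b.image (· + c), x = ∑ x ∈ b, x := by rw [hinv]
  rw [Finset.sum_image (by intro x _ y _ h; exact add_right_cancel h)] at hsum
  rw [Finset.sum_add_distrib, Finset.sum_const, h3] at hsum
  have : (3 : ℕ) • c = 0 := by
    have h0 : ∑ x ∈ b, x + (3:ℕ) • c = ∑ x ∈ b, x + 0 := by rw [add_zero]; exact hsum
    exact add_left_cancel h0
  rw [show (3:ℕ) • c = c + c + c by rw [succ_nsmul, two_nsmul]] at this
  exact this

lemma triple_distinct {α : Type*} [DecidableEq α] {x y z : α}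
    (h : ({x, y, z} : Finset α).card = 3) : x ≠ y ∧ x ≠ z ∧ y ≠ z := by
  refine ⟨?_, ?_, ?_⟩ <;> rintro rfl
  · rw [Finset.insert_idem] at h
    have := Finset.card_insert_le x {z}; simp at this; omega
  · have : ({x,y,x} : Finset α) = {x, y} := by
      ext a; simp; tauto
    rw [this] at h
    have := Finset.card_insert_le x {y}; simp at this; omega
  · have : ({x,y,y} : Finset α) = {x, y} := by ext a; simp
    rw [this] at h
    have := Finset.card_insert_le x {y}; simp at this; omega

lemma triple_card {α : Type*} [DecidableEq α] {x y z : α}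
    (h1 : x ≠ y) (h2 : x ≠ z) (h3 : y ≠ z) : ({x, y, z} : Finset α).card = 3 :=
  Finset.card_eq_three.mpr ⟨x, y, z, h1, h2, h3, rfl⟩




section
variable (v w : ℕ) [NeZero v] [NeZero w]

lemma nz3vw : NeZero (3 * v * w) := ⟨by have := NeZero.ne v; have := NeZero.ne w; intro h; simp [Nat.mul_eq_zero] at h; tauto⟩
lemma nz3v : NeZero (3 * v) := ⟨by have := NeZero.ne v; intro h; simp [Nat.mul_eq_zero] at h; tauto⟩
lemma nz3w : NeZero (3 * w) := ⟨by have := NeZero.ne w; intro h; simp [Nat.mul_eq_zero] at h; tauto⟩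

/-- projection mod 3v -/
noncomputable def piH : ZMod (3 * v * w) →+* ZMod (3 * v) :=
  ZMod.castHom (dvd_mul_right (3 * v) w) _

lemma pi_natCast (m : ℕ) : piH v w ((m : ℕ) : ZMod (3 * v * w)) = (m : ZMod (3 * v)) :=
  map_natCast _ m

/-- multiplication-by-v embedding -/
def mu (a : ZMod (3 * w)) : ZMod (3 * v * w) := ((a.val * v : ℕ) : ZMod (3 * v * w))

variable {v w}

lemma cast3vw_eq (a b : ℕ) (h : a ≡ b [MOD 3 * w]) :
    ((a * v : ℕ) : ZMod (3 * v * w)) = ((b * v : ℕ) : ZMod (3 * v * w)) := by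
  rw [ZMod.natCast_eq_natCast_iff]
  have := h.mul_right' (c := v)
  rwa [show 3 * w * v = 3 * v * w by ring] at this

lemma mu_add (a b : ZMod (3 * w)) : mu v w (a + b) = mu v w a + mu v w b := by
  haveI := nz3w w
  unfold mu
  rw [← Nat.cast_add, ← add_mul]
  apply cast3vw_eq
  rw [ZMod.val_add]
  exact Nat.mod_modEq _ _

lemma mu_zero : mu v w 0 = 0 := by
  haveI := nz3w w
  unfold mu; simp [ZMod.val_zero]

lemma mu_sub (a b : ZMod (3 * w)) : mu v w (a - b) = mu v w a - mu v w b := by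
  have := mu_add (v := v) (a - b) b
  rw [sub_add_cancel] at this
  rw [this]; ring

lemma mu_neg (a : ZMod (3 * w)) : mu v w (-a) = - mu v w a := by
  have := mu_sub (v := v) 0 a
  simpa [mu_zero] using this

lemma mu_inj : Function.Injective (mu v w) := by
  haveI := nz3w w
  haveI := nz3vw v w
  intro a b h
  unfold mu at h
  rw [ZMod.natCast_eq_natCast_iff] at h
  have ha : a.val * v < 3 * v * w := by
    have := ZMod.val_lt a
    calc a.val * v < 3 * w * v := by
          exact (Nat.mul_lt_mul_right (Nat.pos_of_ne_zero (NeZero.ne v))).mpr this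
      _ = 3 * v * w := by ring
  have hb : b.val * v < 3 * v * w := by
    have := ZMod.val_lt b
    calc b.val * v < 3 * w * v := by
          exact (Nat.mul_lt_mul_right (Nat.pos_of_ne_zero (NeZero.ne v))).mpr this
      _ = 3 * v * w := by ring
  have : a.val * v = b.val * v := by
    have h2 := h
    unfold Nat.ModEq at h2
    rwa [Nat.mod_eq_of_lt ha, Nat.mod_eq_of_lt hb] at h2
  have : a.val = b.val := Nat.eq_of_mul_eq_mul_right (Nat.pos_of_ne_zero (NeZero.ne v)) this
  exact ZMod.val_injective _ this

lemma pi_mu (e : ZMod (3 * w)) :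
    piH v w (mu v w e) = (((e.val % 3) * v : ℕ) : ZMod (3 * v)) := by
  unfold mu
  rw [pi_natCast, ZMod.natCast_eq_natCast_iff]
  exact (Nat.mod_modEq e.val 3).symm.mul_right' (c := v)

/-- kernel of piH -/
lemma ker_piH (δ : ZMod (3 * v * w)) (h : piH v w δ = 0) :
    ∃ i : ℕ, i < w ∧ δ = ((3 * v * i : ℕ) : ZMod (3 * v * w)) := by
  haveI := nz3vw v w
  haveI := nz3v v
  have hd : (3 * v) ∣ δ.val := by
    have : piH v w ((δ.val : ℕ) : ZMod (3 * v * w)) = 0 := by rwa [valcast] 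
    rw [pi_natCast] at this
    exact (ZMod.natCast_eq_zero_iff _ _).mp this
  obtain ⟨i, hi⟩ := hd
  refine ⟨i, ?_, ?_⟩
  · have := ZMod.val_lt δ
    rw [hi] at this
    by_contra hc
    push_neg at hc
    have : 3 * v * w ≤ 3 * v * i := Nat.mul_le_mul_left _ hc
    omega
  · conv_lhs => rw [← valcast δ]
    rw [hi]

end



lemma cancel3v {v w a b : ℕ} [NeZero v] (h : 3 * v * a ≡ 3 * v * b [MOD 3 * v * w]) :
    a ≡ b [MOD w] := by
  unfold Nat.ModEq at h ⊢
  rw [Nat.mul_mod_mul_left, Nat.mul_mod_mul_left] at h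
  exact Nat.eq_of_mul_eq_mul_left (by have := NeZero.ne v; omega) h

lemma solve2 {w : ℕ} (hw : Odd w) (k : ℕ) : ∃ i, i < w ∧ 2 * i ≡ k [MOD w] := by
  have hw0 : 0 < w := hw.pos
  refine ⟨(k * ((w + 1) / 2)) % w, Nat.mod_lt _ hw0, ?_⟩
  calc 2 * ((k * ((w + 1) / 2)) % w) ≡ 2 * (k * ((w + 1) / 2)) [MOD w] :=
        (Nat.mod_modEq _ _).mul_left 2
    _ = k * (w + 1) := by
        rw [show 2 * (k * ((w + 1) / 2)) = k * ((w+1)/2 * 2) by ring]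
        congr 1
        exact Nat.div_two_mul_two_of_even (by simpa using hw.add_one)
    _ ≡ k * 1 [MOD w] := Nat.ModEq.mul_left k (by
        have : w ≡ 0 [MOD w] := (Nat.modEq_zero_iff_dvd).mpr dvd_rfl
        simpa using this.add_right 1)
    _ = k := by ring

lemma solve_neg {w : ℕ} (hw : 0 < w) (k : ℕ) : ∃ i, i < w ∧ (k + i) ≡ 0 [MOD w] := by
  refine ⟨(w - k % w) % w, Nat.mod_lt _ hw, ?_⟩
  have h1 : k % w < w := Nat.mod_lt _ hw
  unfold Nat.ModEq
  rw [Nat.add_mod]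
  rw [Nat.mod_mod_of_dvd _ dvd_rfl]
  rcases Nat.eq_zero_or_pos (k % w) with h | h
  · rw [h]
    simp
  · rw [Nat.mod_eq_of_lt (by omega : w - k % w < w)]
    rw [show k % w + (w - k % w) = w by omega]
    simp

-- cancel small coefficients mod odd w
lemma cancel_ci {w : ℕ} (hw : Odd w) {ca cb i i' : ℕ} (hca : ca < 3) (hcb : cb < 3)
    (hne : ca ≠ cb) (h : cb * i + ca * i' ≡ cb * i' + ca * i [MOD w])
    (hi : i < w) (hi' : i' < w) : i = i' := by
  have hw0 : 0 < w := hw.pos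
  have key : ∀ {a b : ℕ}, a ≡ b [MOD w] → a < w → b < w → a = b := by
    intro a b hab ha hb
    unfold Nat.ModEq at hab
    rwa [Nat.mod_eq_of_lt ha, Nat.mod_eq_of_lt hb] at hab
  -- reduce to: (cb - ca) * i ≡ (cb - ca) * i' when cb > ca, etc.
  have main : ∀ {c1 c2 : ℕ}, c2 < 3 → c1 < c2 →
      c2 * i + c1 * i' ≡ c2 * i' + c1 * i [MOD w] → i = i' := by
    intro c1 c2 hc2 hlt hmod
    have hd : c2 = c1 + (c2 - c1) := by omega
    set d := c2 - c1 with hdd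
    have hmod2 : (c1 * i + c1 * i') + d * i ≡ (c1 * i + c1 * i') + d * i' [MOD w] := by
      have e1 : c2 * i + c1 * i' = (c1 * i + c1 * i') + d * i := by
        rw [hd]; ring
      have e2 : c2 * i' + c1 * i = (c1 * i + c1 * i') + d * i' := by
        rw [hd]; ring
      rwa [e1, e2] at hmod
    have hmod3 : d * i ≡ d * i' [MOD w] := Nat.ModEq.add_left_cancel' _ hmod2
    have hd1 : d = 1 ∨ d = 2 := by omega
    rcases hd1 with hd1 | hd1 <;> rw [hd1] at hmod3
    · simp only [one_mul] at hmod3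
      exact key hmod3 hi hi'
    · have := Nat.ModEq.cancel_left_of_coprime (by
        simpa [Nat.coprime_two_left] using hw) hmod3
      exact key this hi hi'
  rcases Nat.lt_or_ge ca cb with h1 | h1
  · exact main hcb h1 h
  · have h2 : cb < ca := by omega
    have h' : ca * i + cb * i' ≡ ca * i' + cb * i [MOD w] := by
      have hs := h.symm
      rwa [Nat.add_comm (cb * i') (ca * i), Nat.add_comm (cb * i) (ca * i')] at hs
    exact main hca h2 h'

lemma ord3 {v : ℕ} [NeZero v] {c : ZMod (3 * v)} (h : c + c + c = 0) :
    c = 0 ∨ c = ((v : ℕ) : ZMod (3 * v)) ∨ c = ((2 * v : ℕ) : ZMod (3 * v)) := by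
  haveI : NeZero (3 * v) := ⟨by have := NeZero.ne v; omega⟩
  have hval : ((c.val * 3 : ℕ) : ZMod (3 * v)) = 0 := by
    push_cast
    rw [ZMod.natCast_val, ZMod.cast_id]
    linear_combination h
  rw [ZMod.natCast_eq_zero_iff] at hval
  have hv : v ∣ c.val := by
    obtain ⟨k, hk⟩ := hval
    refine ⟨k, ?_⟩
    have h3 : c.val * 3 = (v * k) * 3 := by rw [hk]; ring
    exact Nat.eq_of_mul_eq_mul_right (by norm_num) h3
  obtain ⟨m, hm⟩ := hv
  have hlt : c.val < 3 * v := ZMod.val_lt c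
  have hm3 : m < 3 := by
    have := NeZero.ne v
    by_contra hc; push_neg at hc; nlinarith [Nat.pos_of_ne_zero this]
  have hc : c = ((v * m : ℕ) : ZMod (3 * v)) := by rw [← hm, ZMod.natCast_val, ZMod.cast_id]
  interval_cases m
  · left; rw [hc]; simp
  · right; left; rw [hc]; simp
  · right; right; rw [hc]; congr 1; ring




def coordZ (v : ℕ) (t : ZMod (3*v) × ZMod (3*v) × ZMod (3*v)) (c : ℕ) : ZMod (3*v) :=
  if c = 0 then t.1 else if c = 1 then t.2.1 else t.2.2

def elt (v w : ℕ) (t : ZMod (3*v) × ZMod (3*v) × ZMod (3*v)) (i c : ℕ) : ZMod (3*v*w) :=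
  (((coordZ v t c).val + 3*c*i*v : ℕ) : ZMod (3*v*w))

lemma triple_eq_elt (v w : ℕ) (t : ZMod (3*v) × ZMod (3*v) × ZMod (3*v)) (i : ℕ) :
    ({((t.1.val : ℕ) : ZMod (3*v*w)), ((t.2.1.val + 3*i*v : ℕ) : ZMod (3*v*w)),
      ((t.2.2.val + 6*i*v : ℕ) : ZMod (3*v*w))} : Finset (ZMod (3*v*w)))
    = {elt v w t i 0, elt v w t i 1, elt v w t i 2} := by
  unfold elt coordZ
  norm_num

lemma mem_triple_iff {v : ℕ} (a : ZMod (3*v)) (t : ZMod (3*v) × ZMod (3*v) × ZMod (3*v)) :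
    a ∈ ({t.1, t.2.1, t.2.2} : Finset (ZMod (3*v))) ↔ ∃ c, c < 3 ∧ a = coordZ v t c := by
  simp only [Finset.mem_insert, Finset.mem_singleton]
  constructor
  · rintro (rfl | rfl | rfl)
    exacts [⟨0, by norm_num, by simp [coordZ]⟩, ⟨1, by norm_num, by simp [coordZ]⟩,
      ⟨2, by norm_num, by simp [coordZ]⟩]
  · rintro ⟨c, hc, rfl⟩
    interval_cases c <;> simp [coordZ]

lemma coordZ_inj {v : ℕ} {t : ZMod (3*v) × ZMod (3*v) × ZMod (3*v)}
    (h1 : t.1 ≠ t.2.1) (h2 : t.1 ≠ t.2.2) (h3 : t.2.1 ≠ t.2.2)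
    {c c' : ℕ} (hc : c < 3) (hc' : c' < 3) (h : coordZ v t c = coordZ v t c') : c = c' := by
  interval_cases c <;> interval_cases c' <;> simp_all [coordZ]


section
variable {v w : ℕ} [NeZero v] [NeZero w]

lemma cast3iv_pi (c i : ℕ) : ((3*c*i*v : ℕ) : ZMod (3*v)) = 0 := by
  haveI := nz3v v
  exact (ZMod.natCast_eq_zero_iff _ _).mpr ⟨c*i, by ring⟩

lemma elt_pi (t : ZMod (3*v) × ZMod (3*v) × ZMod (3*v)) (i c : ℕ) :
    piH v w (elt v w t i c) = coordZ v t c := by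
  haveI := nz3v v
  unfold elt
  rw [pi_natCast, Nat.cast_add, cast3iv_pi, add_zero, valcast]

lemma key3vw (a b : ℕ) (h : a ≡ b [MOD w]) :
    ((3*v*a : ℕ) : ZMod (3*v*w)) = ((3*v*b : ℕ) : ZMod (3*v*w)) := by
  rw [ZMod.natCast_eq_natCast_iff]
  exact Nat.ModEq.mul_left' _ h

lemma solveT (hw : Odd w) (c0 c1 : ℕ) (hc0 : c0 < 3) (hc1 : c1 < 3) (hne : c0 ≠ c1)
    (γ : ZMod (3*v*w)) (hγ : piH v w γ = 0) :
    ∃ i, i < w ∧ ((3*c1*i*v : ℕ) : ZMod (3*v*w)) - ((3*c0*i*v : ℕ) : ZMod (3*v*w)) = γ := by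
  haveI := nz3vw v w
  obtain ⟨k, hk, rfl⟩ := ker_piH γ hγ
  interval_cases c0 <;> interval_cases c1 <;> [omega; skip; skip; skip; omega; skip; skip; skip; omega]
  · -- (0,1)
    refine ⟨k, hk, ?_⟩
    have h1 := key3vw (v := v) (w := w) k k (Nat.ModEq.refl k)
    rw [show 3*1*k*v = 3*v*k from by ring, show 3*0*k*v = 0 from by ring]
    simp
  · -- (0,2)
    obtain ⟨i, hi, h2⟩ := solve2 hw k
    refine ⟨i, hi, ?_⟩
    have h3 := key3vw (v := v) (w := w) _ _ h2
    rw [show 3*2*i*v = 3*v*(2*i) from by ring, show 3*0*i*v = 0 from by ring]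
    simp [h3]
  · -- (1,0)
    obtain ⟨i, hi, h2⟩ := solve_neg hw.pos k
    refine ⟨i, hi, ?_⟩
    have h3 := key3vw (v := v) (w := w) _ _ h2
    push_cast at h3 ⊢
    linear_combination -h3
  · -- (1,2)
    refine ⟨k, hk, ?_⟩
    push_cast
    ring
  · -- (2,0)
    obtain ⟨j, hj, hj2⟩ := solve_neg hw.pos k
    obtain ⟨i, hi, h2⟩ := solve2 hw j
    refine ⟨i, hi, ?_⟩
    have h4 : k + 2*i ≡ 0 [MOD w] := (h2.add_left k).trans hj2
    have h3 := key3vw (v := v) (w := w) _ _ h4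
    push_cast at h3 ⊢
    linear_combination -h3
  · -- (2,1)
    obtain ⟨i, hi, h2⟩ := solve_neg hw.pos k
    refine ⟨i, hi, ?_⟩
    have h3 := key3vw (v := v) (w := w) _ _ h2
    push_cast at h3 ⊢
    linear_combination -h3

lemma elt_sub_inj (hw : Odd w) (t : ZMod (3*v) × ZMod (3*v) × ZMod (3*v))
    {i i' c0 c1 : ℕ} (hi : i < w) (hi' : i' < w)
    (hc0 : c0 < 3) (hc1 : c1 < 3) (hne : c0 ≠ c1)
    (h : elt v w t i c1 - elt v w t i c0 = elt v w t i' c1 - elt v w t i' c0) : i = i' := by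
  haveI := nz3vw v w
  have h' : (((coordZ v t c1).val + 3*c1*i*v : ℕ) : ZMod (3*v*w))
      - (((coordZ v t c0).val + 3*c0*i*v : ℕ) : ZMod (3*v*w))
      = (((coordZ v t c1).val + 3*c1*i'*v : ℕ) : ZMod (3*v*w))
      - (((coordZ v t c0).val + 3*c0*i'*v : ℕ) : ZMod (3*v*w)) := h
  have key : (((coordZ v t c1).val + 3*c1*i*v + ((coordZ v t c0).val + 3*c0*i'*v) : ℕ) : ZMod (3*v*w))
      = (((coordZ v t c1).val + 3*c1*i'*v + ((coordZ v t c0).val + 3*c0*i*v) : ℕ) : ZMod (3*v*w)) := by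
    push_cast at h' ⊢
    linear_combination h'
  rw [ZMod.natCast_eq_natCast_iff] at key
  have key2 : ((coordZ v t c1).val + (coordZ v t c0).val) + 3*v*(c1*i + c0*i')
      ≡ ((coordZ v t c1).val + (coordZ v t c0).val) + 3*v*(c1*i' + c0*i) [MOD 3*v*w] := by
    rw [show ((coordZ v t c1).val + (coordZ v t c0).val) + 3*v*(c1*i + c0*i')
        = (coordZ v t c1).val + 3*c1*i*v + ((coordZ v t c0).val + 3*c0*i'*v) from by ring,
      show ((coordZ v t c1).val + (coordZ v t c0).val) + 3*v*(c1*i' + c0*i)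
        = (coordZ v t c1).val + 3*c1*i'*v + ((coordZ v t c0).val + 3*c0*i*v) from by ring]
    exact key
  have key3 := Nat.ModEq.add_left_cancel' _ key2
  have key4 := cancel3v (v := v) (w := w) key3
  exact cancel_ci hw hc0 hc1 hne key4 hi hi'

lemma short_diff {a b : ZMod (3*v)}
    (ha : a ∈ ({0, ((v : ℕ) : ZMod (3*v)), ((2*v : ℕ) : ZMod (3*v))} : Finset (ZMod (3*v))))
    (hb : b ∈ ({0, ((v : ℕ) : ZMod (3*v)), ((2*v : ℕ) : ZMod (3*v))} : Finset (ZMod (3*v)))) :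
    a - b = 0 ∨ a - b = ((v : ℕ) : ZMod (3*v)) ∨ a - b = ((2*v : ℕ) : ZMod (3*v)) := by
  haveI := nz3v v
  have h3 : ((3*v : ℕ) : ZMod (3*v)) = 0 := ZMod.natCast_self _
  push_cast at h3
  simp only [Finset.mem_insert, Finset.mem_singleton] at ha hb
  rcases ha with rfl|rfl|rfl <;> rcases hb with rfl|rfl|rfl <;> push_cast <;>
    first
      | (left; ring1)
      | (right; left; ring1)
      | (right; right; ring1)
      | (right; left; linear_combination -h3)
      | (right; right; linear_combination -h3)

end

end Stmt17



/-- Product construction for cyclic `5`-even-free Steiner triple systems: the sets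
`D0` and `D1` built from orbit representatives of a cyclic `5`-even-free
`S(2,3,3v)` and a cyclic `5`-even-free `S(2,3,3w)` (`w` odd) form a system of
representatives of the block orbits of a cyclic `S(2,3,3vw)` on `ZMod (3vw)`. -/
theorem stmt_17 (v w : ℕ) [NeZero v] [NeZero w] (hw : Odd w)
    (B : Finset (Finset (ZMod (3 * v))))
    (hBsize : ∀ b ∈ B, b.card = 3)
    (hBpair : ∀ p q : ZMod (3 * v), p ≠ q → ∃! b, b ∈ B ∧ p ∈ b ∧ q ∈ b)
    (hBcyc : ∀ b ∈ B, b.image (· + 1) ∈ B)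
    (hBfree : ∀ C ⊆ B, C.Nonempty → C.card ≤ 5 →
      ¬ ∀ p ∈ C.biUnion id, Even ((C.filter fun b => p ∈ b).card))
    (C : Finset (Finset (ZMod (3 * w))))
    (hCsize : ∀ b ∈ C, b.card = 3)
    (hCpair : ∀ p q : ZMod (3 * w), p ≠ q → ∃! b, b ∈ C ∧ p ∈ b ∧ q ∈ b)
    (hCcyc : ∀ b ∈ C, b.image (· + 1) ∈ C)
    (hCfree : ∀ D ⊆ C, D.Nonempty → D.card ≤ 5 →
      ¬ ∀ p ∈ D.biUnion id, Even ((D.filter fun b => p ∈ b).card))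
    (SB : Finset (ZMod (3 * v) × ZMod (3 * v) × ZMod (3 * v)))
    (hSB : ∀ t ∈ SB, ({t.1, t.2.1, t.2.2} : Finset (ZMod (3 * v))) ∈ B)
    (hSBrep : ∀ b ∈ B, ∃! t, t ∈ SB ∧ ∃ s : ZMod (3 * v),
      b = ({t.1, t.2.1, t.2.2} : Finset (ZMod (3 * v))).image (· + s))
    (S : ZMod (3 * v) × ZMod (3 * v) × ZMod (3 * v)) (hS : S ∈ SB)
    (hSorb : ∃ s : ZMod (3 * v),
      ({S.1, S.2.1, S.2.2} : Finset (ZMod (3 * v))) =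
        ({0, (v : ZMod (3 * v)), ((2 * v : ℕ) : ZMod (3 * v))} :
          Finset (ZMod (3 * v))).image (· + s))
    (SC : Finset (Finset (ZMod (3 * w)))) (hSC : SC ⊆ C)
    (hSCrep : ∀ b ∈ C, ∃! s, s ∈ SC ∧ ∃ t : ZMod (3 * w), b = s.image (· + t)) :
    ∀ D0 D1 Bnew : Finset (Finset (ZMod (3 * v * w))),
      D0 = ((SB \ {S}) ×ˢ Finset.range w).image (fun ti =>
        ({((ti.1.1.val : ℕ) : ZMod (3 * v * w)),
          ((ti.1.2.1.val + 3 * ti.2 * v : ℕ) : ZMod (3 * v * w)),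
          ((ti.1.2.2.val + 6 * ti.2 * v : ℕ) : ZMod (3 * v * w))} :
            Finset (ZMod (3 * v * w)))) →
      D1 = SC.image (fun s => s.image fun a => ((a.val * v : ℕ) : ZMod (3 * v * w))) →
      Bnew = (D0 ∪ D1).biUnion (fun d => (Finset.range (3 * v * w)).image fun t =>
        d.image (· + ((t : ℕ) : ZMod (3 * v * w)))) →
      (∀ b ∈ Bnew, b.card = 3) ∧
      (∀ p q : ZMod (3 * v * w), p ≠ q → ∃! b, b ∈ Bnew ∧ p ∈ b ∧ q ∈ b) ∧
      (∀ b ∈ Bnew, b.image (· + 1) ∈ Bnew) ∧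
      (∀ b ∈ Bnew, ∃! d, d ∈ D0 ∪ D1 ∧ ∃ t : ZMod (3 * v * w), b = d.image (· + t)) := by

  classical
  intro D0 D1 Bnew hD0 hD1 hBnew
  haveI hnzvw : NeZero (3*v*w) := Stmt17.nz3vw v w
  haveI hnzv3 : NeZero (3*v) := Stmt17.nz3v v
  haveI hnzw3 : NeZero (3*w) := Stmt17.nz3w w
  obtain ⟨s₀, hs₀⟩ := hSorb
  have hBc := Stmt17.trans_closed B hBcyc
  have hCc := Stmt17.trans_closed C hCcyc
  have htd : ∀ t ∈ SB, t.1 ≠ t.2.1 ∧ t.1 ≠ t.2.2 ∧ t.2.1 ≠ t.2.2 :=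
    fun t ht => Stmt17.triple_distinct (hBsize _ (hSB t ht))
  -- short blocks at every shift
  have hshort : ∀ a : ZMod (3*v),
      (({0, ((v : ℕ) : ZMod (3*v)), ((2*v : ℕ) : ZMod (3*v))} : Finset (ZMod (3*v))).image
        (· + a)) ∈ B := by
    intro a
    have h1 := hBc _ (hSB S hS) (a - s₀)
    rw [hs₀, Stmt17.image_add_add, show s₀ + (a - s₀) = a from by ring] at h1
    exact h1
  -- non-short representatives have no difference v or 2v
  have hnons : ∀ t ∈ SB, t ≠ S → ∀ a ∈ ({t.1, t.2.1, t.2.2} : Finset (ZMod (3*v))),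
      ∀ b ∈ ({t.1, t.2.1, t.2.2} : Finset (ZMod (3*v))), a ≠ b →
      a - b ≠ ((v : ℕ) : ZMod (3*v)) ∧ a - b ≠ ((2*v : ℕ) : ZMod (3*v)) := by
    intro t ht htS a ha b hb hab
    have main : ∀ c : ZMod (3*v),
        c ∈ ({0, ((v : ℕ) : ZMod (3*v)), ((2*v : ℕ) : ZMod (3*v))} : Finset (ZMod (3*v))) →
        a - b = c → t = S := by
      intro c hc heq
      have hblock1 : ({t.1, t.2.1, t.2.2} : Finset (ZMod (3*v))) ∈ B := hSB t ht
      have hblock2 := hshort b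
      have hain : a ∈ (({0, ((v : ℕ) : ZMod (3*v)), ((2*v : ℕ) : ZMod (3*v))} :
          Finset (ZMod (3*v))).image (· + b)) :=
        Finset.mem_image.mpr ⟨c, hc, by rw [← heq]; ring⟩
      have hbin : b ∈ (({0, ((v : ℕ) : ZMod (3*v)), ((2*v : ℕ) : ZMod (3*v))} :
          Finset (ZMod (3*v))).image (· + b)) :=
        Finset.mem_image.mpr ⟨0, by simp, by ring⟩
      have hbeq := (hBpair a b hab).unique ⟨hblock1, ha, hb⟩ ⟨hblock2, hain, hbin⟩
      have hrep := hSBrep _ hblock1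
      refine hrep.unique ⟨ht, 0, by simp⟩ ⟨hS, b - s₀, ?_⟩
      rw [hbeq, hs₀, Stmt17.image_add_add, show s₀ + (b - s₀) = b from by ring]
    constructor
    · intro heq
      exact htS (main _ (by simp) heq)
    · intro heq
      exact htS (main _ (by simp) heq)
  -- membership in Bnew
  have hBnewmem : ∀ b : Finset (ZMod (3*v*w)),
      b ∈ Bnew ↔ ∃ d, (d ∈ D0 ∪ D1) ∧ ∃ τ : ZMod (3*v*w), b = d.image (· + τ) := by
    intro b
    rw [hBnew]
    simp only [Finset.mem_biUnion, Finset.mem_image, Finset.mem_range]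
    constructor
    · rintro ⟨d, hd, τ, hτ, rfl⟩
      exact ⟨d, hd, _, rfl⟩
    · rintro ⟨d, hd, τ, rfl⟩
      exact ⟨d, hd, τ.val, ZMod.val_lt τ, by rw [Stmt17.valcast]⟩
  -- D0 structure
  have hD0elt : ∀ d ∈ D0, ∃ t, (t ∈ SB ∧ t ≠ S) ∧ ∃ i, i < w ∧
      d = ({Stmt17.elt v w t i 0, Stmt17.elt v w t i 1, Stmt17.elt v w t i 2} :
        Finset (ZMod (3*v*w))) := by
    intro d hd
    rw [hD0] at hd
    simp only [Finset.mem_image, Finset.mem_product, Finset.mem_sdiff,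
      Finset.mem_singleton, Finset.mem_range] at hd
    obtain ⟨⟨t, i⟩, ⟨⟨htSB, htS⟩, hi⟩, rfl⟩ := hd
    exact ⟨t, ⟨htSB, htS⟩, i, hi, Stmt17.triple_eq_elt v w t i⟩
  have hD0intro : ∀ t, t ∈ SB → t ≠ S → ∀ i, i < w →
      ({Stmt17.elt v w t i 0, Stmt17.elt v w t i 1, Stmt17.elt v w t i 2} :
        Finset (ZMod (3*v*w))) ∈ D0 := by
    intro t ht htS i hi
    rw [hD0]
    refine Finset.mem_image.mpr ⟨(t, i), Finset.mem_product.mpr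
      ⟨Finset.mem_sdiff.mpr ⟨ht, Finset.notMem_singleton.mpr htS⟩, Finset.mem_range.mpr hi⟩,
      Stmt17.triple_eq_elt v w t i⟩
  have hD1elt : ∀ d ∈ D1, ∃ s, s ∈ SC ∧
      d = s.image (fun a => ((a.val * v : ℕ) : ZMod (3*v*w))) := by
    intro d hd
    rw [hD1] at hd
    obtain ⟨s, hs, rfl⟩ := Finset.mem_image.mp hd
    exact ⟨s, hs, rfl⟩
  have hmemelt : ∀ (t : ZMod (3*v) × ZMod (3*v) × ZMod (3*v)) (i : ℕ) (α : ZMod (3*v*w)),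
      α ∈ ({Stmt17.elt v w t i 0, Stmt17.elt v w t i 1, Stmt17.elt v w t i 2} :
        Finset (ZMod (3*v*w))) ↔ ∃ c, c < 3 ∧ α = Stmt17.elt v w t i c := by
    intro t i α
    simp only [Finset.mem_insert, Finset.mem_singleton]
    constructor
    · rintro (rfl | rfl | rfl)
      exacts [⟨0, by norm_num, rfl⟩, ⟨1, by norm_num, rfl⟩, ⟨2, by norm_num, rfl⟩]
    · rintro ⟨c, hc, rfl⟩
      interval_cases c <;> simp
  have heltne : ∀ t ∈ SB, ∀ (i : ℕ), ∀ c c' : ℕ, c < 3 → c' < 3 → c ≠ c' →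
      Stmt17.elt v w t i c ≠ Stmt17.elt v w t i c' := by
    intro t ht i c c' hc hc' hne heq
    apply hne
    apply Stmt17.coordZ_inj (htd t ht).1 (htd t ht).2.1 (htd t ht).2.2 hc hc'
    rw [← Stmt17.elt_pi (w := w) t i c, ← Stmt17.elt_pi (w := w) t i c', heq]
  have hmuinj : Function.Injective (fun a : ZMod (3*w) => ((a.val * v : ℕ) : ZMod (3*v*w))) :=
    Stmt17.mu_inj (v := v) (w := w)
  have hcard : ∀ d ∈ D0 ∪ D1, d.card = 3 := by
    intro d hd
    rcases Finset.mem_union.mp hd with h | h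
    · obtain ⟨t, ⟨ht, htS⟩, i, hi, rfl⟩ := hD0elt d h
      exact Stmt17.triple_card (heltne t ht i 0 1 (by norm_num) (by norm_num) (by norm_num))
        (heltne t ht i 0 2 (by norm_num) (by norm_num) (by norm_num))
        (heltne t ht i 1 2 (by norm_num) (by norm_num) (by norm_num))
    · obtain ⟨s, hsSC, rfl⟩ := hD1elt d h
      rw [Finset.card_image_of_injective _ hmuinj]
      exact hCsize s (hSC hsSC)
  -- difference coverage: existence

  have cover : ∀ δ : ZMod (3*v*w), δ ≠ 0 →
      ∃ d, d ∈ D0 ∪ D1 ∧ ∃ α, α ∈ d ∧ ∃ β, β ∈ d ∧ β - α = δ := by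
    intro δ hδ0
    by_cases hdvd : v ∣ δ.val
    · -- difference is a multiple of v : use D1
      obtain ⟨m, hm⟩ := hdvd
      have hmlt : m < 3 * w := by
        have h1 := ZMod.val_lt δ
        rw [hm] at h1
        by_contra hc
        push_neg at hc
        have h2 : v * (3*w) ≤ v * m := Nat.mul_le_mul_left _ hc
        have h3 : v * (3*w) = 3*v*w := by ring
        omega
      have heval : ((m : ZMod (3*w))).val = m := by
        rw [ZMod.val_natCast, Nat.mod_eq_of_lt hmlt]
      have hmue : Stmt17.mu v w ((m : ZMod (3*w))) = δ := by
        unfold Stmt17.mu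
        rw [heval, show m * v = v * m from by ring, ← hm, Stmt17.valcast]
      have hene : (0 : ZMod (3*w)) ≠ (m : ZMod (3*w)) := by
        intro h
        apply hδ0
        rw [← hmue, ← h, Stmt17.mu_zero]
      obtain ⟨bC, ⟨hbC, h0b, heb⟩, -⟩ := hCpair 0 (m : ZMod (3*w)) hene
      obtain ⟨s, ⟨hsSC, u, hbs⟩, -⟩ := hSCrep bC hbC
      rw [hbs] at h0b heb
      obtain ⟨a0, ha0, ha0e⟩ := Finset.mem_image.mp h0b
      obtain ⟨a1, ha1, ha1e⟩ := Finset.mem_image.mp heb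
      refine ⟨s.image (fun a => ((a.val * v : ℕ) : ZMod (3*v*w))),
        Finset.mem_union_right _ (by rw [hD1]; exact Finset.mem_image_of_mem _ hsSC),
        Stmt17.mu v w a0, Finset.mem_image_of_mem _ ha0,
        Stmt17.mu v w a1, Finset.mem_image_of_mem _ ha1, ?_⟩
      rw [← Stmt17.mu_sub, show a1 - a0 = (m : ZMod (3*w)) from by linear_combination ha1e - ha0e,
        hmue]
    · -- difference is not a multiple of v : use D0
      have hgen : ∀ r : ℕ, Stmt17.piH v w δ = ((r * v : ℕ) : ZMod (3*v)) → v ∣ δ.val := by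
        intro r hr
        have h0 : Stmt17.piH v w ((δ.val : ℕ) : ZMod (3*v*w)) = Stmt17.piH v w δ := by
          rw [Stmt17.valcast]
        rw [Stmt17.pi_natCast] at h0
        have h1 : ((δ.val : ℕ) : ZMod (3*v)) = ((r*v : ℕ) : ZMod (3*v)) := by rw [h0, hr]
        rw [ZMod.natCast_eq_natCast_iff] at h1
        have h2 : δ.val % (3*v) = (r*v) % (3*v) := h1
        have h3 : δ.val % (3*v) % v = (r*v) % (3*v) % v := by rw [h2]
        rw [Nat.mod_mod_of_dvd _ ⟨3, by ring⟩, Nat.mod_mod_of_dvd _ ⟨3, by ring⟩] at h3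
        rw [Nat.mul_mod_left] at h3
        exact Nat.dvd_of_mod_eq_zero h3
      have hdv0 : Stmt17.piH v w δ ≠ 0 := by
        intro h
        exact hdvd (hgen 0 (by rw [h]; norm_num))
      have hdvV : Stmt17.piH v w δ ≠ ((v : ℕ) : ZMod (3*v)) := by
        intro h
        exact hdvd (hgen 1 (by rw [h]; norm_num))
      have hdv2V : Stmt17.piH v w δ ≠ ((2*v : ℕ) : ZMod (3*v)) := by
        intro h
        exact hdvd (hgen 2 (by rw [h]))
      obtain ⟨bB, ⟨hbB, h0b, hdb⟩, -⟩ := hBpair 0 (Stmt17.piH v w δ) (fun h => hdv0 h.symm)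
      obtain ⟨t, ⟨htSB, u, hbt⟩, -⟩ := hSBrep bB hbB
      have htS : t ≠ S := by
        rintro rfl
        rw [hbt, hs₀, Stmt17.image_add_add] at h0b hdb
        obtain ⟨c0, hc0, hc0e⟩ := Finset.mem_image.mp h0b
        obtain ⟨c1, hc1, hc1e⟩ := Finset.mem_image.mp hdb
        have hdiff : c1 - c0 = Stmt17.piH v w δ := by linear_combination hc1e - hc0e
        rcases Stmt17.short_diff hc1 hc0 with h | h | h
        · exact hdv0 (by rw [← hdiff, h])
        · exact hdvV (by rw [← hdiff, h])
        · exact hdv2V (by rw [← hdiff, h])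
      rw [hbt] at h0b hdb
      obtain ⟨a0, ha0m, ha0e⟩ := Finset.mem_image.mp h0b
      obtain ⟨a1, ha1m, ha1e⟩ := Finset.mem_image.mp hdb
      obtain ⟨c0, hc0, rfl⟩ := (Stmt17.mem_triple_iff a0 t).mp ha0m
      obtain ⟨c1, hc1, rfl⟩ := (Stmt17.mem_triple_iff a1 t).mp ha1m
      have hcc : c0 ≠ c1 := by
        rintro rfl
        exact hdv0 (by linear_combination ha0e - ha1e)
      have hπγ : Stmt17.piH v w (δ - (((Stmt17.coordZ v t c1).val : ℕ) : ZMod (3*v*w))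
          + (((Stmt17.coordZ v t c0).val : ℕ) : ZMod (3*v*w))) = 0 := by
        rw [map_add, map_sub, Stmt17.pi_natCast, Stmt17.pi_natCast,
          Stmt17.valcast, Stmt17.valcast]
        linear_combination ha0e - ha1e
      obtain ⟨i, hi, hsol⟩ := Stmt17.solveT hw c0 c1 hc0 hc1 hcc _ hπγ
      refine ⟨({Stmt17.elt v w t i 0, Stmt17.elt v w t i 1, Stmt17.elt v w t i 2} :
          Finset (ZMod (3*v*w))),
        Finset.mem_union_left _ (hD0intro t htSB htS i hi),
        Stmt17.elt v w t i c0, (hmemelt t i _).mpr ⟨c0, hc0, rfl⟩,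
        Stmt17.elt v w t i c1, (hmemelt t i _).mpr ⟨c1, hc1, rfl⟩, ?_⟩
      unfold Stmt17.elt
      push_cast at hsol ⊢
      linear_combination hsol
  -- difference coverage: uniqueness

  have hVne : ((v : ℕ) : ZMod (3*v)) ≠ 0 := by
    rw [Ne, ZMod.natCast_eq_zero_iff]
    intro h
    have hvpos := Nat.pos_of_ne_zero (NeZero.ne v)
    have := Nat.le_of_dvd hvpos h
    omega
  have h2Vne : ((2*v : ℕ) : ZMod (3*v)) ≠ 0 := by
    rw [Ne, ZMod.natCast_eq_zero_iff]
    intro h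
    have hvpos := Nat.pos_of_ne_zero (NeZero.ne v)
    have := Nat.le_of_dvd (by omega) h
    omega
  have hmix : ∀ t ∈ SB, t ≠ S → ∀ (i c0 c1 : ℕ), c0 < 3 → c1 < 3 → c0 ≠ c1 →
      ∀ e : ZMod (3*w),
      Stmt17.elt v w t i c1 - Stmt17.elt v w t i c0 ≠ Stmt17.mu v w e := by
    intro t ht htS i c0 c1 hc0 hc1 hcc e heq
    have hπ : Stmt17.coordZ v t c1 - Stmt17.coordZ v t c0
        = (((e.val % 3) * v : ℕ) : ZMod (3*v)) := by
      have h := congrArg (Stmt17.piH v w) heq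
      rwa [map_sub, Stmt17.elt_pi, Stmt17.elt_pi, Stmt17.pi_mu] at h
    have hmem0 : Stmt17.coordZ v t c0 ∈ ({t.1, t.2.1, t.2.2} : Finset (ZMod (3*v))) :=
      (Stmt17.mem_triple_iff _ t).mpr ⟨c0, hc0, rfl⟩
    have hmem1 : Stmt17.coordZ v t c1 ∈ ({t.1, t.2.1, t.2.2} : Finset (ZMod (3*v))) :=
      (Stmt17.mem_triple_iff _ t).mpr ⟨c1, hc1, rfl⟩
    have hcne : Stmt17.coordZ v t c1 ≠ Stmt17.coordZ v t c0 := fun h =>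
      hcc (Stmt17.coordZ_inj (htd t ht).1 (htd t ht).2.1 (htd t ht).2.2 hc1 hc0 h).symm
    have hr : e.val % 3 = 0 ∨ e.val % 3 = 1 ∨ e.val % 3 = 2 := by omega
    rcases hr with h | h | h
    · rw [h] at hπ
      norm_num at hπ
      exact hcne (sub_eq_zero.mp hπ)
    · rw [h] at hπ
      exact (hnons t ht htS _ hmem1 _ hmem0 hcne).1 (by rw [hπ]; norm_num)
    · rw [h] at hπ
      exact (hnons t ht htS _ hmem1 _ hmem0 hcne).2 hπ
  have coverU : ∀ d ∈ D0 ∪ D1, ∀ d' ∈ D0 ∪ D1, ∀ α ∈ d, ∀ β ∈ d, ∀ α' ∈ d', ∀ β' ∈ d',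
      α ≠ β → β - α = β' - α' → d = d' ∧ d.image (· + (α' - α)) = d' := by
    intro d hd d' hd' α hα β hβ α' hα' β' hβ' hne hδ
    rcases Finset.mem_union.mp hd with h0 | h1 <;> rcases Finset.mem_union.mp hd' with h0' | h1'
    · -- D0, D0
      obtain ⟨t, ⟨ht, htS⟩, i, hi, rfl⟩ := hD0elt d h0
      obtain ⟨t', ⟨ht', htS'⟩, i', hi', rfl⟩ := hD0elt d' h0'
      obtain ⟨c0, hc0, rfl⟩ := (hmemelt t i α).mp hα
      obtain ⟨c1, hc1, rfl⟩ := (hmemelt t i β).mp hβ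
      obtain ⟨c0', hc0', rfl⟩ := (hmemelt t' i' α').mp hα'
      obtain ⟨c1', hc1', rfl⟩ := (hmemelt t' i' β').mp hβ'
      have hcc : c0 ≠ c1 := by rintro rfl; exact hne rfl
      have hπδ : Stmt17.coordZ v t c1 - Stmt17.coordZ v t c0
          = Stmt17.coordZ v t' c1' - Stmt17.coordZ v t' c0' := by
        have h := congrArg (Stmt17.piH v w) hδ
        rwa [map_sub, map_sub, Stmt17.elt_pi, Stmt17.elt_pi, Stmt17.elt_pi,
          Stmt17.elt_pi] at h
      have hbl : ({t.1, t.2.1, t.2.2} : Finset (ZMod (3*v)))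
          = ({t'.1, t'.2.1, t'.2.2} : Finset (ZMod (3*v))).image
              (· + (Stmt17.coordZ v t c0 - Stmt17.coordZ v t' c0')) := by
        have hne2 : Stmt17.coordZ v t c0 ≠ Stmt17.coordZ v t c1 := fun h =>
          hcc (Stmt17.coordZ_inj (htd t ht).1 (htd t ht).2.1 (htd t ht).2.2 hc0 hc1 h)
        refine (hBpair _ _ hne2).unique
          ⟨hSB t ht, (Stmt17.mem_triple_iff _ t).mpr ⟨c0, hc0, rfl⟩,
            (Stmt17.mem_triple_iff _ t).mpr ⟨c1, hc1, rfl⟩⟩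
          ⟨hBc _ (hSB t' ht') _,
            Finset.mem_image.mpr ⟨Stmt17.coordZ v t' c0',
              (Stmt17.mem_triple_iff _ t').mpr ⟨c0', hc0', rfl⟩, by ring⟩,
            Finset.mem_image.mpr ⟨Stmt17.coordZ v t' c1',
              (Stmt17.mem_triple_iff _ t').mpr ⟨c1', hc1', rfl⟩, by linear_combination -hπδ⟩⟩
      have htt : t = t' := (hSBrep _ (hSB t ht)).unique ⟨ht, 0, by simp⟩ ⟨ht', _, hbl⟩
      subst htt
      have hc3 := Stmt17.stab3 (hBsize _ (hSB t ht)) hbl.symm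
      have hceq : Stmt17.coordZ v t c0 - Stmt17.coordZ v t c0' = 0 := by
        rcases Stmt17.ord3 hc3 with h | h | h
        · exact h
        · exfalso
          have hne3 : Stmt17.coordZ v t c0 ≠ Stmt17.coordZ v t c0' := by
            intro hx
            rw [hx, sub_self] at h
            exact hVne h.symm
          exact (hnons t ht htS _ ((Stmt17.mem_triple_iff _ t).mpr ⟨c0, hc0, rfl⟩)
            _ ((Stmt17.mem_triple_iff _ t).mpr ⟨c0', hc0', rfl⟩) hne3).1 h
        · exfalso
          have hne3 : Stmt17.coordZ v t c0 ≠ Stmt17.coordZ v t c0' := by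
            intro hx
            rw [hx, sub_self] at h
            exact h2Vne h.symm
          exact (hnons t ht htS _ ((Stmt17.mem_triple_iff _ t).mpr ⟨c0, hc0, rfl⟩)
            _ ((Stmt17.mem_triple_iff _ t).mpr ⟨c0', hc0', rfl⟩) hne3).2 h
      have hcc0 : c0 = c0' :=
        Stmt17.coordZ_inj (htd t ht).1 (htd t ht).2.1 (htd t ht).2.2 hc0 hc0'
          (sub_eq_zero.mp hceq)
      subst hcc0
      have hc1eq : Stmt17.coordZ v t c1 = Stmt17.coordZ v t c1' := by
        linear_combination hπδ
      have hcc1 : c1 = c1' :=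
        Stmt17.coordZ_inj (htd t ht).1 (htd t ht).2.1 (htd t ht).2.2 hc1 hc1' hc1eq
      subst hcc1
      have hii : i = i' := Stmt17.elt_sub_inj hw t hi hi' hc0 hc1 hcc hδ
      subst hii
      refine ⟨rfl, ?_⟩
      rw [sub_self]
      ext x; simp
    · -- D0, D1
      obtain ⟨t, ⟨ht, htS⟩, i, hi, rfl⟩ := hD0elt d h0
      obtain ⟨s', hs'SC, rfl⟩ := hD1elt d' h1'
      obtain ⟨c0, hc0, rfl⟩ := (hmemelt t i α).mp hα
      obtain ⟨c1, hc1, rfl⟩ := (hmemelt t i β).mp hβ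
      obtain ⟨a0', ha0', rfl⟩ := Finset.mem_image.mp hα'
      obtain ⟨a1', ha1', rfl⟩ := Finset.mem_image.mp hβ'
      exfalso
      have hcc : c0 ≠ c1 := by rintro rfl; exact hne rfl
      have h2 : Stmt17.mu v w a1' - Stmt17.mu v w a0' = Stmt17.mu v w (a1' - a0') :=
        (Stmt17.mu_sub a1' a0').symm
      exact hmix t ht htS i c0 c1 hc0 hc1 hcc (a1' - a0') (hδ.trans h2)
    · -- D1, D0
      obtain ⟨s, hsSC, rfl⟩ := hD1elt d h1
      obtain ⟨t', ⟨ht', htS'⟩, i', hi', rfl⟩ := hD0elt d' h0'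
      obtain ⟨a0, ha0, rfl⟩ := Finset.mem_image.mp hα
      obtain ⟨a1, ha1, rfl⟩ := Finset.mem_image.mp hβ
      obtain ⟨c0', hc0', rfl⟩ := (hmemelt t' i' α').mp hα'
      obtain ⟨c1', hc1', rfl⟩ := (hmemelt t' i' β').mp hβ'
      exfalso
      have hcc' : c0' ≠ c1' := by
        rintro rfl
        rw [sub_self] at hδ
        exact (sub_ne_zero.mpr hne.symm) hδ
      have h2 : Stmt17.mu v w a1 - Stmt17.mu v w a0 = Stmt17.mu v w (a1 - a0) :=
        (Stmt17.mu_sub a1 a0).symm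
      exact hmix t' ht' htS' i' c0' c1' hc0' hc1' hcc' (a1 - a0) (hδ.symm.trans h2)
    · -- D1, D1
      obtain ⟨s, hsSC, rfl⟩ := hD1elt d h1
      obtain ⟨s', hs'SC, rfl⟩ := hD1elt d' h1'
      obtain ⟨a0, ha0, rfl⟩ := Finset.mem_image.mp hα
      obtain ⟨a1, ha1, rfl⟩ := Finset.mem_image.mp hβ
      obtain ⟨a0', ha0', rfl⟩ := Finset.mem_image.mp hα'
      obtain ⟨a1', ha1', rfl⟩ := Finset.mem_image.mp hβ'
      have hmueq : Stmt17.mu v w (a1 - a0) = Stmt17.mu v w (a1' - a0') := by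
        rw [Stmt17.mu_sub, Stmt17.mu_sub]
        exact hδ
      have he : a1 - a0 = a1' - a0' := Stmt17.mu_inj hmueq
      have hnea : a0 ≠ a1 := fun h => hne (by rw [h])
      have hs'' := hCc _ (hSC hs'SC) (a0 - a0')
      have hm1 : a0 ∈ s'.image (· + (a0 - a0')) :=
        Finset.mem_image.mpr ⟨a0', ha0', by ring⟩
      have hm2 : a1 ∈ s'.image (· + (a0 - a0')) :=
        Finset.mem_image.mpr ⟨a1', ha1', by linear_combination -he⟩
      have hseq := (hCpair a0 a1 hnea).unique ⟨hSC hsSC, ha0, ha1⟩ ⟨hs'', hm1, hm2⟩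
      have hss' : s = s' := (hSCrep s (hSC hsSC)).unique ⟨hsSC, 0, by simp⟩ ⟨hs'SC, _, hseq⟩
      subst hss'
      refine ⟨rfl, ?_⟩
      have hrev : s.image (· + (a0' - a0)) = s := by
        conv_lhs => rw [hseq]
        rw [Stmt17.image_add_add, show a0 - a0' + (a0' - a0) = 0 from by ring]
        ext x; simp
      show (s.image (fun a => ((a.val * v : ℕ) : ZMod (3*v*w)))).image
          (· + (Stmt17.mu v w a0' - Stmt17.mu v w a0))
        = s.image (fun a => ((a.val * v : ℕ) : ZMod (3*v*w)))
      rw [show Stmt17.mu v w a0' - Stmt17.mu v w a0 = Stmt17.mu v w (a0' - a0) from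
        (Stmt17.mu_sub a0' a0).symm]
      rw [Finset.image_image]
      conv_rhs => rw [← hrev, Finset.image_image]
      apply Finset.image_congr
      intro x hx
      simp only [Function.comp]
      exact (Stmt17.mu_add x (a0' - a0)).symm
  refine ⟨?_, ?_, ?_, ?_⟩
  · -- cardinality
    intro b hb
    obtain ⟨d, hd, τ, rfl⟩ := (hBnewmem b).mp hb
    rw [Finset.card_image_of_injective _ (add_left_injective τ)]
    exact hcard d hd
  · -- pair condition
    intro p q hpq
    have hδ : q - p ≠ 0 := sub_ne_zero.mpr (Ne.symm hpq)
    obtain ⟨d, hd, α, hα, β, hβ, hβα⟩ := cover (q - p) hδ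
    refine ⟨d.image (· + (p - α)), ⟨(hBnewmem _).mpr ⟨d, hd, _, rfl⟩,
      Finset.mem_image.mpr ⟨α, hα, by ring⟩,
      Finset.mem_image.mpr ⟨β, hβ, by linear_combination hβα⟩⟩, ?_⟩
    rintro b ⟨hbB, hpb, hqb⟩
    obtain ⟨d', hd', τ', rfl⟩ := (hBnewmem b).mp hbB
    obtain ⟨α', hα', hα'e⟩ := Finset.mem_image.mp hpb
    obtain ⟨β', hβ', hβ'e⟩ := Finset.mem_image.mp hqb
    have hne' : α' ≠ β' := by
      intro h
      exact hpq (by rw [← hα'e, ← hβ'e, h])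
    have hδ' : β' - α' = β - α := by
      rw [hβα]
      linear_combination hβ'e - hα'e
    obtain ⟨hdd, him⟩ := coverU d' hd' d hd α' hα' β' hβ' α hα β hβ hne' hδ'
    rw [← him, Stmt17.image_add_add,
      show α - α' + (p - α) = τ' from by linear_combination -hα'e]
  · -- translation closure
    intro b hb
    obtain ⟨d, hd, τ, rfl⟩ := (hBnewmem b).mp hb
    rw [Stmt17.image_add_add]
    exact (hBnewmem _).mpr ⟨d, hd, τ + 1, rfl⟩
  · -- unique orbit representative
    intro b hb
    obtain ⟨d, hd, τ, rfl⟩ := (hBnewmem b).mp hb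
    refine ⟨d, ⟨hd, τ, rfl⟩, ?_⟩
    rintro d' ⟨hd', τ', heq⟩
    have hc3 := hcard d hd
    have h2 : 1 < d.card := by omega
    obtain ⟨α, hα, β, hβ, hne⟩ := Finset.one_lt_card.mp h2
    have hpmem : α + τ ∈ d'.image (· + τ') := by
      rw [← heq]; exact Finset.mem_image.mpr ⟨α, hα, rfl⟩
    have hqmem : β + τ ∈ d'.image (· + τ') := by
      rw [← heq]; exact Finset.mem_image.mpr ⟨β, hβ, rfl⟩
    obtain ⟨α', hα', hα'e⟩ := Finset.mem_image.mp hpmem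
    obtain ⟨β', hβ', hβ'e⟩ := Finset.mem_image.mp hqmem
    have hne' : α' ≠ β' := by
      intro h
      rw [h] at hα'e
      exact hne (by
        have : α + τ = β + τ := by rw [← hα'e, hβ'e]
        exact add_right_cancel this)
    have hδ' : β' - α' = β - α := by linear_combination hβ'e - hα'e
    exact (coverU d' hd' d hd α' hα' β' hβ' α hα β hβ hne' hδ').1
end

section
/- On V = Q × Z_3 with (Q,∘) an idempotent commutative quasigroup, every pair of distinct points of V lies in exactly one block of B0 ∪ B1, where B0 = {{(a,0),(a,1),(a,2)} : a ∈ Q} and B1 = {{(a,i),(b,i),(a∘b,i+1)} : a ≠ b, i ∈ Z_3}. -/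
/-- The Bose construction over any idempotent commutative quasigroup `(Q, ∘)` covers
every pair of distinct points of `Q × ZMod 3` exactly once. -/
theorem stmt_19 {Q : Type*} [Fintype Q] [DecidableEq Q] (op : Q → Q → Q)
    (hidem : ∀ a, op a a = a) (hcomm : ∀ a b, op a b = op b a)
    (hquasi : ∀ a c : Q, ∃! x, op a x = c) :
    ∀ p q : Q × ZMod 3, p ≠ q →
      ∃! b, b ∈ (((Finset.univ : Finset Q).image fun a =>
            ({(a, 0), (a, 1), (a, 2)} : Finset (Q × ZMod 3))) ∪
          (((Finset.univ : Finset (Q × Q × ZMod 3)).filter fun t => t.1 ≠ t.2.1).image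
            fun t => ({(t.1, t.2.2), (t.2.1, t.2.2), (op t.1 t.2.1, t.2.2 + 1)} :
              Finset (Q × ZMod 3)))) ∧ p ∈ b ∧ q ∈ b := by
  -- cancellation laws
  have hcanc : ∀ x y z : Q, op x y = op x z → y = z := by
    intro x y z h
    obtain ⟨w, _, hu⟩ := hquasi x (op x z)
    exact (hu y h).trans (hu z rfl).symm
  have hcanc' : ∀ x y z : Q, op y x = op z x → y = z := by
    intro x y z h
    exact hcanc x y z (by rw [hcomm x y, hcomm x z]; exact h)
  have hopne1 : ∀ x y : Q, x ≠ y → op x y ≠ x := by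
    intro x y h hc
    exact h (hcanc x x y (by rw [hidem x, hc]))
  have hopne2 : ∀ x y : Q, x ≠ y → op x y ≠ y := by
    intro x y h hc
    exact h (hcanc' y x y (by rw [hidem y, hc]))
  -- ZMod 3 facts
  have hz : ∀ m : ZMod 3, m = 0 ∨ m = 1 ∨ m = 2 := by decide
  have hz1 : ∀ k : ZMod 3, k + 1 ≠ k := by decide
  have hz2 : ∀ k l : ZMod 3, k ≠ l → l = k + 1 ∨ k = l + 1 := by decide
  have hz3 : ∀ k : ZMod 3, k + 1 + 1 ≠ k := by decide
  have hzadd : ∀ k l : ZMod 3, k + 1 = l + 1 → k = l := by decide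
  -- membership characterizations
  have hT0 : ∀ (c a : Q) (m : ZMod 3),
      (c, m) ∈ ({(a,0),(a,1),(a,2)} : Finset (Q × ZMod 3)) ↔ c = a := by
    intro c a m
    rcases hz m with h|h|h <;> subst h <;>
      simp [Prod.ext_iff, show (0:ZMod 3) ≠ 1 by decide, show (0:ZMod 3) ≠ 2 by decide,
        show (1:ZMod 3) ≠ 0 by decide, show (1:ZMod 3) ≠ 2 by decide,
        show (2:ZMod 3) ≠ 0 by decide, show (2:ZMod 3) ≠ 1 by decide]
  have hT1 : ∀ (c x y : Q) (k m : ZMod 3),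
      (c,m) ∈ ({(x,k),(y,k),(op x y,k+1)} : Finset (Q × ZMod 3)) ↔
        (c = x ∧ m = k) ∨ (c = y ∧ m = k) ∨ (c = op x y ∧ m = k + 1) := by
    intro c x y k m
    simp [Prod.ext_iff]
  have hswap : ∀ (x y : Q) (k : ZMod 3),
      ({(x,k),(y,k),(op x y,k+1)} : Finset (Q × ZMod 3)) = {(y,k),(x,k),(op y x,k+1)} := by
    intro x y k
    rw [hcomm x y]
    exact Finset.insert_comm _ _ _
  -- helpers for membership in the union
  have hU0 : ∀ a : Q, ({(a,0),(a,1),(a,2)} : Finset (Q × ZMod 3)) ∈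
      (((Finset.univ : Finset Q).image fun a =>
            ({(a, 0), (a, 1), (a, 2)} : Finset (Q × ZMod 3))) ∪
          (((Finset.univ : Finset (Q × Q × ZMod 3)).filter fun t => t.1 ≠ t.2.1).image
            fun t => ({(t.1, t.2.2), (t.2.1, t.2.2), (op t.1 t.2.1, t.2.2 + 1)} :
              Finset (Q × ZMod 3)))) := by
    intro a
    exact Finset.mem_union_left _ (Finset.mem_image.2 ⟨a, Finset.mem_univ a, rfl⟩)
  have hU1 : ∀ (x y : Q) (k : ZMod 3), x ≠ y →
      ({(x,k),(y,k),(op x y,k+1)} : Finset (Q × ZMod 3)) ∈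
      (((Finset.univ : Finset Q).image fun a =>
            ({(a, 0), (a, 1), (a, 2)} : Finset (Q × ZMod 3))) ∪
          (((Finset.univ : Finset (Q × Q × ZMod 3)).filter fun t => t.1 ≠ t.2.1).image
            fun t => ({(t.1, t.2.2), (t.2.1, t.2.2), (op t.1 t.2.1, t.2.2 + 1)} :
              Finset (Q × ZMod 3)))) := by
    intro x y k hxy
    exact Finset.mem_union_right _ (Finset.mem_image.2
      ⟨(x, y, k), Finset.mem_filter.2 ⟨Finset.mem_univ _, hxy⟩, rfl⟩)
  intro p q hpq
  obtain ⟨a, i⟩ := p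
  obtain ⟨b, j⟩ := q
  by_cases hab : a = b
  · -- same first coordinate: block of type B₀
    subst hab
    have hij : i ≠ j := fun h => hpq (by rw [h])
    refine ⟨({(a,0),(a,1),(a,2)} : Finset (Q × ZMod 3)), ⟨hU0 a, (hT0 a a i).2 rfl,
      (hT0 a a j).2 rfl⟩, ?_⟩
    rintro s ⟨hsU, hps, hqs⟩
    rcases Finset.mem_union.1 hsU with h | h
    · obtain ⟨a', -, rfl⟩ := Finset.mem_image.1 h
      rw [(hT0 a a' i).1 hps]
    · obtain ⟨⟨x, y, k⟩, ht, rfl⟩ := Finset.mem_image.1 h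
      have hxy : x ≠ y := (Finset.mem_filter.1 ht).2
      exfalso
      rcases (hT1 a x y k i).1 hps with ⟨h1, h2⟩ | ⟨h1, h2⟩ | ⟨h1, h2⟩ <;>
        rcases (hT1 a x y k j).1 hqs with ⟨h3, h4⟩ | ⟨h3, h4⟩ | ⟨h3, h4⟩
      · exact hij (h2.trans h4.symm)
      · exact hxy (h1.symm.trans h3)
      · exact hopne1 x y hxy (h3.symm.trans h1)
      · exact hxy (h3.symm.trans h1)
      · exact hij (h2.trans h4.symm)
      · exact hopne2 x y hxy (h3.symm.trans h1)
      · exact hopne1 x y hxy (h1.symm.trans h3)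
      · exact hopne2 x y hxy (h1.symm.trans h3)
      · exact hij (h2.trans h4.symm)
  · by_cases hij : i = j
    · -- same level, different points: block of type B₁ at level i
      subst hij
      refine ⟨({(a,i),(b,i),(op a b,i+1)} : Finset (Q × ZMod 3)), ⟨hU1 a b i hab,
        (hT1 a a b i i).2 (Or.inl ⟨rfl, rfl⟩), (hT1 b a b i i).2 (Or.inr (Or.inl ⟨rfl, rfl⟩))⟩, ?_⟩
      rintro s ⟨hsU, hps, hqs⟩
      rcases Finset.mem_union.1 hsU with h | h
      · obtain ⟨a', -, rfl⟩ := Finset.mem_image.1 h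
        exact absurd (((hT0 a a' i).1 hps).trans ((hT0 b a' i).1 hqs).symm) hab
      · obtain ⟨⟨x, y, k⟩, ht, rfl⟩ := Finset.mem_image.1 h
        have hxy : x ≠ y := (Finset.mem_filter.1 ht).2
        rcases (hT1 a x y k i).1 hps with ⟨h1, h2⟩ | ⟨h1, h2⟩ | ⟨h1, h2⟩ <;>
          rcases (hT1 b x y k i).1 hqs with ⟨h3, h4⟩ | ⟨h3, h4⟩ | ⟨h3, h4⟩
        · exact absurd (h1.trans h3.symm) hab
        · rw [h1, h3, h2]
        · exact absurd (h4.symm.trans h2) (hz1 k)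
        · rw [h1, h3, h2]; exact hswap x y k
        · exact absurd (h1.trans h3.symm) hab
        · exact absurd (h4.symm.trans h2) (hz1 k)
        · exact absurd (h2.symm.trans h4) (hz1 k)
        · exact absurd (h2.symm.trans h4) (hz1 k)
        · exact absurd (h1.trans h3.symm) hab
    · -- different levels, different points
      rcases hz2 i j hij with hj | hi
      · -- j = i + 1
        subst hj
        obtain ⟨y0, hy0, hyu⟩ := hquasi a b
        have hay0 : a ≠ y0 := by
          intro h
          exact hab (by rw [← hy0, ← h, hidem])
        refine ⟨({(a,i),(y0,i),(op a y0,i+1)} : Finset (Q × ZMod 3)), ⟨hU1 a y0 i hay0,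
          (hT1 a a y0 i i).2 (Or.inl ⟨rfl, rfl⟩),
          (hT1 b a y0 i (i+1)).2 (Or.inr (Or.inr ⟨hy0.symm, rfl⟩))⟩, ?_⟩
        rintro s ⟨hsU, hps, hqs⟩
        rcases Finset.mem_union.1 hsU with h | h
        · obtain ⟨a', -, rfl⟩ := Finset.mem_image.1 h
          exact absurd (((hT0 a a' i).1 hps).trans ((hT0 b a' (i+1)).1 hqs).symm) hab
        · obtain ⟨⟨x, y, k⟩, ht, rfl⟩ := Finset.mem_image.1 h
          have hxy : x ≠ y := (Finset.mem_filter.1 ht).2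
          rcases (hT1 a x y k i).1 hps with ⟨h1, h2⟩ | ⟨h1, h2⟩ | ⟨h1, h2⟩ <;>
            rcases (hT1 b x y k (i+1)).1 hqs with ⟨h3, h4⟩ | ⟨h3, h4⟩ | ⟨h3, h4⟩
          · exact absurd (h4.trans h2.symm) (hz1 i)
          · exact absurd (h4.trans h2.symm) (hz1 i)
          · -- a = x, i = k, b = op x y : then y = y0
            rw [← h1] at h3
            rw [← h1, ← h2]
            rw [hyu y h3.symm]
          · exact absurd (h4.trans h2.symm) (hz1 i)
          · exact absurd (h4.trans h2.symm) (hz1 i)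
          · -- a = y, i = k, b = op x y : then x = y0
            rw [← h1] at h3
            rw [← h1, ← h2]
            rw [hyu x ((hcomm a x).trans h3.symm)]
            exact hswap y0 a i
          · -- i = k+1, i+1 = k : impossible
            rw [← h4] at h2
            exact absurd h2.symm (hz3 i)
          · rw [← h4] at h2
            exact absurd h2.symm (hz3 i)
          · -- i = k+1, i+1 = k+1 → i = k, so k = k+1
            exact absurd ((hzadd i k h4).symm.trans h2) (hz1 k).symm
      · -- i = j + 1
        subst hi
        obtain ⟨y0, hy0, hyu⟩ := hquasi b a
        have hby0 : b ≠ y0 := by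
          intro h
          have : a = b := by rw [← hy0, ← h, hidem]
          exact hab this
        refine ⟨({(b,j),(y0,j),(op b y0,j+1)} : Finset (Q × ZMod 3)), ⟨hU1 b y0 j hby0,
          (hT1 a b y0 j (j+1)).2 (Or.inr (Or.inr ⟨hy0.symm, rfl⟩)),
          (hT1 b b y0 j j).2 (Or.inl ⟨rfl, rfl⟩)⟩, ?_⟩
        rintro s ⟨hsU, hps, hqs⟩
        rcases Finset.mem_union.1 hsU with h | h
        · obtain ⟨a', -, rfl⟩ := Finset.mem_image.1 h
          exact absurd (((hT0 a a' (j+1)).1 hps).trans ((hT0 b a' j).1 hqs).symm) hab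
        · obtain ⟨⟨x, y, k⟩, ht, rfl⟩ := Finset.mem_image.1 h
          have hxy : x ≠ y := (Finset.mem_filter.1 ht).2
          rcases (hT1 b x y k j).1 hqs with ⟨h1, h2⟩ | ⟨h1, h2⟩ | ⟨h1, h2⟩ <;>
            rcases (hT1 a x y k (j+1)).1 hps with ⟨h3, h4⟩ | ⟨h3, h4⟩ | ⟨h3, h4⟩
          · exact absurd (h4.trans h2.symm) (hz1 j)
          · exact absurd (h4.trans h2.symm) (hz1 j)
          · rw [← h1] at h3
            rw [← h1, ← h2]
            rw [hyu y h3.symm]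
          · exact absurd (h4.trans h2.symm) (hz1 j)
          · exact absurd (h4.trans h2.symm) (hz1 j)
          · rw [← h1] at h3
            rw [← h1, ← h2]
            rw [hyu x ((hcomm b x).trans h3.symm)]
            exact hswap y0 b j
          · rw [← h4] at h2
            exact absurd h2.symm (hz3 j)
          · rw [← h4] at h2
            exact absurd h2.symm (hz3 j)
          · exact absurd ((hzadd j k h4).symm.trans h2) (hz1 k).symm
end
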